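/- arXiv:2103.11086 — 7 statements merged into one kernel-verified Lean document; each statement's English description precedes it below -/
import Mathlib

section
/- The quotient ring S_Σ/(I_Σ + (p₁ − 1)) is isomorphic as a ℂ-algebra to the polynomial ring over ℂ in the 13 variables p₂,p₃,p₄,q₂,q₃,s₁₂,s₁₃,s₂₂,s₂₃,s₃₃,t₁,t₂,t₃ (that is, on the chart p₁ = 1 of Σ¹⁴_𝔸, the coordinates q₁, r, u, s₁₁ can be regularly eliminated and the chart is isomorphic to affine 13-space). -/
/-!
`S_Σ = ℂ[p₁,p₂,p₃,p₄,q₁,q₂,q₃,r,u,s₁₁,s₁₂,s₁₃,s₂₂,s₂₃,s₃₃,t₁,t₂,t₃]` is the polynomial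
ring in 18 variables, indexed by `Fin 18` in this order.  Writing `p`, `q`, `t` for the
corresponding column vectors, `S` for the symmetric matrix with entries `sᵢⱼ`, `A` for the
skew-symmetric matrix attached to `q`, `S†` for the adjugate of `S`,
`(F₁,F₂,F₃)ᵗ = (rI − AS)·A·t` and `F₄ = −(r² + qᵗ·S†·q)`, the ideal `I_Σ` is generated by
the nine polynomials `pᵗ·q`, the three entries of `(rI + AS)·p + p₄·A·t`,
`pᵗ·S·p + p₄·pᵗ·t`, the three entries of `u·p − (F₁,F₂,F₃)ᵗ`, and `u·p₄ − F₄`.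
`R_Σ = S_Σ/I_Σ`.
-/

open MvPolynomial Matrix

noncomputable section

/-- The polynomial ring in the 18 variables
`p₁,p₂,p₃,p₄,q₁,q₂,q₃,r,u,s₁₁,s₁₂,s₁₃,s₂₂,s₂₃,s₃₃,t₁,t₂,t₃` (in this order). -/
abbrev SSigma : Type := MvPolynomial (Fin 18) ℂ

/-- The column vector `p = (p₁,p₂,p₃)ᵗ`. -/
def pVec : Fin 3 → SSigma := ![X 0, X 1, X 2]

/-- The column vector `q = (q₁,q₂,q₃)ᵗ`. -/
def qVec : Fin 3 → SSigma := ![X 4, X 5, X 6]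

/-- The column vector `t = (t₁,t₂,t₃)ᵗ`. -/
def tVec : Fin 3 → SSigma := ![X 15, X 16, X 17]

/-- The symmetric matrix `S` with entries `sᵢⱼ`. -/
def Smat : Matrix (Fin 3) (Fin 3) SSigma :=
  !![X 9, X 10, X 11; X 10, X 12, X 13; X 11, X 13, X 14]

/-- The skew-symmetric matrix `A` associated to `q`. -/
def Amat : Matrix (Fin 3) (Fin 3) SSigma :=
  !![0, -X 6, X 5; X 6, 0, -X 4; -X 5, X 4, 0]

/-- The vector of polynomials `(F₁,F₂,F₃)ᵗ = (rI − AS)·A·t`. -/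
def Fvec : Fin 3 → SSigma :=
  ((X 7 : SSigma) • (1 : Matrix (Fin 3) (Fin 3) SSigma) - Amat * Smat) *ᵥ (Amat *ᵥ tVec)

/-- The polynomial `F₄ = −(r² + qᵗ·S†·q)`, where `S†` is the adjugate of `S`. -/
def F4 : SSigma := -((X 7) ^ 2 + qVec ⬝ᵥ (Smat.adjugate *ᵥ qVec))

/-- The nine generators of the ideal `I_Σ`: `pᵗ·q`; the three entries of
`(rI + AS)·p + p₄·A·t`; `pᵗ·S·p + p₄·pᵗ·t`; the three entries of `u·p − (F₁,F₂,F₃)ᵗ`;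
and `u·p₄ − F₄`. -/
def sigmaGens : Fin 9 → SSigma :=
  ![pVec ⬝ᵥ qVec,
    ((((X 7 : SSigma) • (1 : Matrix (Fin 3) (Fin 3) SSigma) + Amat * Smat) *ᵥ pVec) +
      (X 3 : SSigma) • (Amat *ᵥ tVec)) 0,
    ((((X 7 : SSigma) • (1 : Matrix (Fin 3) (Fin 3) SSigma) + Amat * Smat) *ᵥ pVec) +
      (X 3 : SSigma) • (Amat *ᵥ tVec)) 1,
    ((((X 7 : SSigma) • (1 : Matrix (Fin 3) (Fin 3) SSigma) + Amat * Smat) *ᵥ pVec) +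
      (X 3 : SSigma) • (Amat *ᵥ tVec)) 2,
    pVec ⬝ᵥ (Smat *ᵥ pVec) + X 3 * (pVec ⬝ᵥ tVec),
    ((X 8 : SSigma) • pVec - Fvec) 0,
    ((X 8 : SSigma) • pVec - Fvec) 1,
    ((X 8 : SSigma) • pVec - Fvec) 2,
    X 8 * X 3 - F4]

/-- The ideal `I_Σ ⊆ S_Σ`. -/
def ISigma : Ideal SSigma := Ideal.span (Set.range sigmaGens)

/-- The quotient ring `R_Σ = S_Σ/I_Σ`. -/
abbrev RSigma : Type := SSigma ⧸ ISigma

namespace SigmaChartAux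

abbrev T13 : Type := MvPolynomial (Fin 13) ℂ

def subQ : T13 := (-1) * X 1 * X 4 + (-1) * X 0 * X 3

def subR : T13 := X 4 * X 5 + (-1) * X 3 * X 6 + X 2 * X 4 * X 11 + (-1) * X 2 * X 3 * X 12 + X 1 * X 4 * X 8 + (-1) * X 1 * X 3 * X 9 + X 0 * X 4 * X 7 + (-1) * X 0 * X 3 * X 8

def subT : T13 := (-1) * X 2 * X 10 + (-2) * X 1 * X 6 + (-1) * X 1 * X 2 * X 12 + (-1) * X 1 ^ 2 * X 9 + (-2) * X 0 * X 5 + (-1) * X 0 * X 2 * X 11 + (-2) * X 0 * X 1 * X 8 + (-1) * X 0 ^ 2 * X 7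

def subU : T13 := X 4 ^ 2 * X 7 * X 10 + (-2) * X 4 ^ 2 * X 5 * X 11 + (-2) * X 3 * X 4 * X 8 * X 10 + (2) * X 3 * X 4 * X 6 * X 11 + (2) * X 3 * X 4 * X 5 * X 12 + X 3 ^ 2 * X 9 * X 10 + (-2) * X 3 ^ 2 * X 6 * X 12 + (-1) * X 2 * X 4 ^ 2 * X 11 ^ 2 + (2) * X 2 * X 3 * X 4 * X 11 * X 12 + (-1) * X 2 * X 3 ^ 2 * X 12 ^ 2 + (-2) * X 1 * X 4 ^ 2 * X 8 * X 11 + X 1 * X 4 ^ 2 * X 7 * X 12 + (2) * X 1 * X 3 * X 4 * X 9 * X 11 + (-1) * X 1 * X 3 ^ 2 * X 9 * X 12 + (-1) * X 0 * X 4 ^ 2 * X 7 * X 11 + (2) * X 0 * X 3 * X 4 * X 7 * X 12 + X 0 * X 3 ^ 2 * X 9 * X 11 + (-2) * X 0 * X 3 ^ 2 * X 8 * X 12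

def substF : Fin 18 → T13 := ![1, X 0, X 1, X 2, subQ, X 3, X 4, subR, subU, subT, X 5, X 6, X 7, X 8, X 9, X 10, X 11, X 12]

def phi : SSigma →ₐ[ℂ] T13 := aeval substF

def emb : Fin 13 → SSigma := ![X 1, X 2, X 3, X 5, X 6, X 10, X 11, X 12, X 13, X 14, X 15, X 16, X 17]

def sig : Fin 18 → SSigma := fun i => aeval emb (substF i)

lemma substF_0 : substF 0 = 1 := rfl
lemma substF_1 : substF 1 = X 0 := rfl
lemma substF_2 : substF 2 = X 1 := rfl
lemma substF_3 : substF 3 = X 2 := rfl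
lemma substF_4 : substF 4 = subQ := rfl
lemma substF_5 : substF 5 = X 3 := rfl
lemma substF_6 : substF 6 = X 4 := rfl
lemma substF_7 : substF 7 = subR := rfl
lemma substF_8 : substF 8 = subU := rfl
lemma substF_9 : substF 9 = subT := rfl
lemma substF_10 : substF 10 = X 5 := rfl
lemma substF_11 : substF 11 = X 6 := rfl
lemma substF_12 : substF 12 = X 7 := rfl
lemma substF_13 : substF 13 = X 8 := rfl
lemma substF_14 : substF 14 = X 9 := rfl
lemma substF_15 : substF 15 = X 10 := rfl
lemma substF_16 : substF 16 = X 11 := rfl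
lemma substF_17 : substF 17 = X 12 := rfl

lemma emb_0 : emb 0 = X 1 := rfl
lemma emb_1 : emb 1 = X 2 := rfl
lemma emb_2 : emb 2 = X 3 := rfl
lemma emb_3 : emb 3 = X 5 := rfl
lemma emb_4 : emb 4 = X 6 := rfl
lemma emb_5 : emb 5 = X 10 := rfl
lemma emb_6 : emb 6 = X 11 := rfl
lemma emb_7 : emb 7 = X 12 := rfl
lemma emb_8 : emb 8 = X 13 := rfl
lemma emb_9 : emb 9 = X 14 := rfl
lemma emb_10 : emb 10 = X 15 := rfl
lemma emb_11 : emb 11 = X 16 := rfl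
lemma emb_12 : emb 12 = X 17 := rfl

def Qe : SSigma := (-1) * X 2 * X 6 + (-1) * X 1 * X 5

def Re : SSigma := X 6 * X 10 + (-1) * X 5 * X 11 + X 3 * X 6 * X 16 + (-1) * X 3 * X 5 * X 17 + X 2 * X 6 * X 13 + (-1) * X 2 * X 5 * X 14 + X 1 * X 6 * X 12 + (-1) * X 1 * X 5 * X 13

def Te : SSigma := (-1) * X 3 * X 15 + (-2) * X 2 * X 11 + (-1) * X 2 * X 3 * X 17 + (-1) * X 2 ^ 2 * X 14 + (-2) * X 1 * X 10 + (-1) * X 1 * X 3 * X 16 + (-2) * X 1 * X 2 * X 13 + (-1) * X 1 ^ 2 * X 12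

def Ue : SSigma := X 6 ^ 2 * X 12 * X 15 + (-2) * X 6 ^ 2 * X 10 * X 16 + (-2) * X 5 * X 6 * X 13 * X 15 + (2) * X 5 * X 6 * X 11 * X 16 + (2) * X 5 * X 6 * X 10 * X 17 + X 5 ^ 2 * X 14 * X 15 + (-2) * X 5 ^ 2 * X 11 * X 17 + (-1) * X 3 * X 6 ^ 2 * X 16 ^ 2 + (2) * X 3 * X 5 * X 6 * X 16 * X 17 + (-1) * X 3 * X 5 ^ 2 * X 17 ^ 2 + (-2) * X 2 * X 6 ^ 2 * X 13 * X 16 + X 2 * X 6 ^ 2 * X 12 * X 17 + (2) * X 2 * X 5 * X 6 * X 14 * X 16 + (-1) * X 2 * X 5 ^ 2 * X 14 * X 17 + (-1) * X 1 * X 6 ^ 2 * X 12 * X 16 + (2) * X 1 * X 5 * X 6 * X 12 * X 17 + X 1 * X 5 ^ 2 * X 14 * X 16 + (-2) * X 1 * X 5 ^ 2 * X 13 * X 17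

def c7 : SSigma := X 7 + (-1) * X 6 * X 10 + X 5 * X 11

def c9 : SSigma := X 9 + X 3 * X 15 + (2) * X 2 * X 11 + (2) * X 1 * X 10 + X 0 * X 9

def ca : SSigma := X 6 * X 13 * X 16 + (-1) * X 6 * X 12 * X 17 + (-1) * X 5 * X 14 * X 16 + X 5 * X 13 * X 17

def cb : SSigma := (-1) * X 6 * X 16 + X 5 * X 17

def g0e : SSigma := X 2 * X 6 + X 1 * X 5 + X 0 * X 4

def g1e : SSigma := (-1) * X 3 * X 6 * X 16 + X 3 * X 5 * X 17 + (-1) * X 2 * X 6 * X 13 + X 2 * X 5 * X 14 + (-1) * X 1 * X 6 * X 12 + X 1 * X 5 * X 13 + X 0 * X 7 + (-1) * X 0 * X 6 * X 10 + X 0 * X 5 * X 11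

def g2e : SSigma := X 3 * X 6 * X 15 + (-1) * X 3 * X 4 * X 17 + X 2 * X 6 * X 11 + (-1) * X 2 * X 4 * X 14 + X 1 * X 7 + X 1 * X 6 * X 10 + (-1) * X 1 * X 4 * X 13 + X 0 * X 6 * X 9 + (-1) * X 0 * X 4 * X 11

def g3e : SSigma := (-1) * X 3 * X 5 * X 15 + X 3 * X 4 * X 16 + X 2 * X 7 + (-1) * X 2 * X 5 * X 11 + X 2 * X 4 * X 13 + (-1) * X 1 * X 5 * X 10 + X 1 * X 4 * X 12 + (-1) * X 0 * X 5 * X 9 + X 0 * X 4 * X 10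

def g4e : SSigma := X 2 * X 3 * X 17 + X 2 ^ 2 * X 14 + X 1 * X 3 * X 16 + (2) * X 1 * X 2 * X 13 + X 1 ^ 2 * X 12 + X 0 * X 3 * X 15 + (2) * X 0 * X 2 * X 11 + (2) * X 0 * X 1 * X 10 + X 0 ^ 2 * X 9

def g5e : SSigma := X 6 * X 7 * X 16 + (-1) * X 6 ^ 2 * X 12 * X 15 + X 6 ^ 2 * X 10 * X 16 + (-1) * X 5 * X 7 * X 17 + (2) * X 5 * X 6 * X 13 * X 15 + (-1) * X 5 * X 6 * X 11 * X 16 + (-1) * X 5 * X 6 * X 10 * X 17 + (-1) * X 5 ^ 2 * X 14 * X 15 + X 5 ^ 2 * X 11 * X 17 + (-1) * X 4 * X 6 * X 13 * X 16 + X 4 * X 6 * X 12 * X 17 + X 4 * X 5 * X 14 * X 16 + (-1) * X 4 * X 5 * X 13 * X 17 + X 0 * X 8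

def g6e : SSigma := (-1) * X 6 * X 7 * X 15 + X 6 ^ 2 * X 10 * X 15 + (-1) * X 6 ^ 2 * X 9 * X 16 + (-1) * X 5 * X 6 * X 11 * X 15 + X 5 * X 6 * X 9 * X 17 + X 4 * X 7 * X 17 + (-1) * X 4 * X 6 * X 13 * X 15 + (2) * X 4 * X 6 * X 11 * X 16 + (-1) * X 4 * X 6 * X 10 * X 17 + X 4 * X 5 * X 14 * X 15 + (-1) * X 4 * X 5 * X 11 * X 17 + (-1) * X 4 ^ 2 * X 14 * X 16 + X 4 ^ 2 * X 13 * X 17 + X 1 * X 8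

def g7e : SSigma := X 5 * X 7 * X 15 + (-1) * X 5 * X 6 * X 10 * X 15 + X 5 * X 6 * X 9 * X 16 + X 5 ^ 2 * X 11 * X 15 + (-1) * X 5 ^ 2 * X 9 * X 17 + (-1) * X 4 * X 7 * X 16 + X 4 * X 6 * X 12 * X 15 + (-1) * X 4 * X 6 * X 10 * X 16 + (-1) * X 4 * X 5 * X 13 * X 15 + (-1) * X 4 * X 5 * X 11 * X 16 + (2) * X 4 * X 5 * X 10 * X 17 + X 4 ^ 2 * X 13 * X 16 + (-1) * X 4 ^ 2 * X 12 * X 17 + X 2 * X 8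

def g8e : SSigma := X 7 ^ 2 + (-1) * X 6 ^ 2 * X 10 ^ 2 + X 6 ^ 2 * X 9 * X 12 + (2) * X 5 * X 6 * X 10 * X 11 + (-2) * X 5 * X 6 * X 9 * X 13 + (-1) * X 5 ^ 2 * X 11 ^ 2 + X 5 ^ 2 * X 9 * X 14 + (-2) * X 4 * X 6 * X 11 * X 12 + (2) * X 4 * X 6 * X 10 * X 13 + (2) * X 4 * X 5 * X 11 * X 13 + (-2) * X 4 * X 5 * X 10 * X 14 + (-1) * X 4 ^ 2 * X 13 ^ 2 + X 4 ^ 2 * X 12 * X 14 + X 3 * X 8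

lemma hgen0 : sigmaGens 0 = g0e := by
  rw [show sigmaGens 0 = (pVec ⬝ᵥ qVec) from rfl]
  simp [pVec, qVec, tVec, Smat, Amat, Fvec, F4, Matrix.mulVec, dotProduct, Fin.sum_univ_three, Matrix.mul_apply, Matrix.one_apply, Matrix.adjugate_fin_three_of, Matrix.smul_apply, Pi.add_apply, Pi.sub_apply, Pi.smul_apply, smul_eq_mul, g0e]
  ring

lemma hgen1 : sigmaGens 1 = g1e := by
  rw [show sigmaGens 1 = (((((X 7 : SSigma) • (1 : Matrix (Fin 3) (Fin 3) SSigma) + Amat * Smat) *ᵥ pVec) + (X 3 : SSigma) • (Amat *ᵥ tVec)) 0) from rfl]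
  simp [pVec, qVec, tVec, Smat, Amat, Fvec, F4, Matrix.mulVec, dotProduct, Fin.sum_univ_three, Matrix.mul_apply, Matrix.one_apply, Matrix.adjugate_fin_three_of, Matrix.smul_apply, Pi.add_apply, Pi.sub_apply, Pi.smul_apply, smul_eq_mul, g1e]
  ring

lemma hgen2 : sigmaGens 2 = g2e := by
  rw [show sigmaGens 2 = (((((X 7 : SSigma) • (1 : Matrix (Fin 3) (Fin 3) SSigma) + Amat * Smat) *ᵥ pVec) + (X 3 : SSigma) • (Amat *ᵥ tVec)) 1) from rfl]
  simp [pVec, qVec, tVec, Smat, Amat, Fvec, F4, Matrix.mulVec, dotProduct, Fin.sum_univ_three, Matrix.mul_apply, Matrix.one_apply, Matrix.adjugate_fin_three_of, Matrix.smul_apply, Pi.add_apply, Pi.sub_apply, Pi.smul_apply, smul_eq_mul, g2e]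
  ring

lemma hgen3 : sigmaGens 3 = g3e := by
  rw [show sigmaGens 3 = (((((X 7 : SSigma) • (1 : Matrix (Fin 3) (Fin 3) SSigma) + Amat * Smat) *ᵥ pVec) + (X 3 : SSigma) • (Amat *ᵥ tVec)) 2) from rfl]
  simp [pVec, qVec, tVec, Smat, Amat, Fvec, F4, Matrix.mulVec, dotProduct, Fin.sum_univ_three, Matrix.mul_apply, Matrix.one_apply, Matrix.adjugate_fin_three_of, Matrix.smul_apply, Pi.add_apply, Pi.sub_apply, Pi.smul_apply, smul_eq_mul, g3e]
  ring

lemma hgen4 : sigmaGens 4 = g4e := by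
  rw [show sigmaGens 4 = (pVec ⬝ᵥ (Smat *ᵥ pVec) + X 3 * (pVec ⬝ᵥ tVec)) from rfl]
  simp [pVec, qVec, tVec, Smat, Amat, Fvec, F4, Matrix.mulVec, dotProduct, Fin.sum_univ_three, Matrix.mul_apply, Matrix.one_apply, Matrix.adjugate_fin_three_of, Matrix.smul_apply, Pi.add_apply, Pi.sub_apply, Pi.smul_apply, smul_eq_mul, g4e]
  ring

lemma hgen5 : sigmaGens 5 = g5e := by
  rw [show sigmaGens 5 = (((X 8 : SSigma) • pVec - Fvec) 0) from rfl]
  simp [pVec, qVec, tVec, Smat, Amat, Fvec, F4, Matrix.mulVec, dotProduct, Fin.sum_univ_three, Matrix.mul_apply, Matrix.one_apply, Matrix.adjugate_fin_three_of, Matrix.smul_apply, Pi.add_apply, Pi.sub_apply, Pi.smul_apply, smul_eq_mul, g5e]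
  ring

lemma hgen6 : sigmaGens 6 = g6e := by
  rw [show sigmaGens 6 = (((X 8 : SSigma) • pVec - Fvec) 1) from rfl]
  simp [pVec, qVec, tVec, Smat, Amat, Fvec, F4, Matrix.mulVec, dotProduct, Fin.sum_univ_three, Matrix.mul_apply, Matrix.one_apply, Matrix.adjugate_fin_three_of, Matrix.smul_apply, Pi.add_apply, Pi.sub_apply, Pi.smul_apply, smul_eq_mul, g6e]
  ring

lemma hgen7 : sigmaGens 7 = g7e := by
  rw [show sigmaGens 7 = (((X 8 : SSigma) • pVec - Fvec) 2) from rfl]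
  simp [pVec, qVec, tVec, Smat, Amat, Fvec, F4, Matrix.mulVec, dotProduct, Fin.sum_univ_three, Matrix.mul_apply, Matrix.one_apply, Matrix.adjugate_fin_three_of, Matrix.smul_apply, Pi.add_apply, Pi.sub_apply, Pi.smul_apply, smul_eq_mul, g7e]
  ring

lemma hgen8 : sigmaGens 8 = g8e := by
  rw [show sigmaGens 8 = (X 8 * X 3 - F4) from rfl]
  simp [pVec, qVec, tVec, Smat, Amat, Fvec, F4, Matrix.mulVec, dotProduct, Fin.sum_univ_three, Matrix.mul_apply, Matrix.one_apply, Matrix.adjugate_fin_three_of, Matrix.smul_apply, Pi.add_apply, Pi.sub_apply, Pi.smul_apply, smul_eq_mul, g8e]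
  ring

lemma sig_0 : sig 0 = 1 := by simp [sig, substF_0]

lemma sig_1 : sig 1 = X 1 := by simp only [sig, substF_1, aeval_X, emb_0]

lemma sig_2 : sig 2 = X 2 := by simp only [sig, substF_2, aeval_X, emb_1]

lemma sig_3 : sig 3 = X 3 := by simp only [sig, substF_3, aeval_X, emb_2]

lemma sig_4 : sig 4 = Qe := by
  simp only [sig, substF_4, subQ, Qe, map_add, _root_.map_mul, map_sub, map_neg, map_pow, _root_.map_one, map_ofNat, aeval_X, emb_0, emb_1, emb_2, emb_3, emb_4, emb_5, emb_6, emb_7, emb_8, emb_9, emb_10, emb_11, emb_12]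
  try ring

lemma sig_5 : sig 5 = X 5 := by simp only [sig, substF_5, aeval_X, emb_3]

lemma sig_6 : sig 6 = X 6 := by simp only [sig, substF_6, aeval_X, emb_4]

lemma sig_7 : sig 7 = Re := by
  simp only [sig, substF_7, subR, Re, map_add, _root_.map_mul, map_sub, map_neg, map_pow, _root_.map_one, map_ofNat, aeval_X, emb_0, emb_1, emb_2, emb_3, emb_4, emb_5, emb_6, emb_7, emb_8, emb_9, emb_10, emb_11, emb_12]
  try ring

lemma sig_8 : sig 8 = Ue := by
  simp only [sig, substF_8, subU, Ue, map_add, _root_.map_mul, map_sub, map_neg, map_pow, _root_.map_one, map_ofNat, aeval_X, emb_0, emb_1, emb_2, emb_3, emb_4, emb_5, emb_6, emb_7, emb_8, emb_9, emb_10, emb_11, emb_12]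
  try ring

lemma sig_9 : sig 9 = Te := by
  simp only [sig, substF_9, subT, Te, map_add, _root_.map_mul, map_sub, map_neg, map_pow, _root_.map_one, map_ofNat, aeval_X, emb_0, emb_1, emb_2, emb_3, emb_4, emb_5, emb_6, emb_7, emb_8, emb_9, emb_10, emb_11, emb_12]
  try ring

lemma sig_10 : sig 10 = X 10 := by simp only [sig, substF_10, aeval_X, emb_5]

lemma sig_11 : sig 11 = X 11 := by simp only [sig, substF_11, aeval_X, emb_6]

lemma sig_12 : sig 12 = X 12 := by simp only [sig, substF_12, aeval_X, emb_7]

lemma sig_13 : sig 13 = X 13 := by simp only [sig, substF_13, aeval_X, emb_8]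

lemma sig_14 : sig 14 = X 14 := by simp only [sig, substF_14, aeval_X, emb_9]

lemma sig_15 : sig 15 = X 15 := by simp only [sig, substF_15, aeval_X, emb_10]

lemma sig_16 : sig 16 = X 16 := by simp only [sig, substF_16, aeval_X, emb_11]

lemma sig_17 : sig 17 = X 17 := by simp only [sig, substF_17, aeval_X, emb_12]

lemma phig0 : phi (g0e) = 0 := by
  simp only [phi, g0e, map_add, _root_.map_mul, map_sub, map_neg, map_pow, _root_.map_one, map_ofNat, aeval_X, substF_0, substF_1, substF_2, substF_3, substF_4, substF_5, substF_6, substF_7, substF_8, substF_9, substF_10, substF_11, substF_12, substF_13, substF_14, substF_15, substF_16, substF_17, subQ, subR, subT, subU]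
  ring

lemma phig1 : phi (g1e) = 0 := by
  simp only [phi, g1e, map_add, _root_.map_mul, map_sub, map_neg, map_pow, _root_.map_one, map_ofNat, aeval_X, substF_0, substF_1, substF_2, substF_3, substF_4, substF_5, substF_6, substF_7, substF_8, substF_9, substF_10, substF_11, substF_12, substF_13, substF_14, substF_15, substF_16, substF_17, subQ, subR, subT, subU]
  ring

lemma phig2 : phi (g2e) = 0 := by
  simp only [phi, g2e, map_add, _root_.map_mul, map_sub, map_neg, map_pow, _root_.map_one, map_ofNat, aeval_X, substF_0, substF_1, substF_2, substF_3, substF_4, substF_5, substF_6, substF_7, substF_8, substF_9, substF_10, substF_11, substF_12, substF_13, substF_14, substF_15, substF_16, substF_17, subQ, subR, subT, subU]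
  ring

lemma phig3 : phi (g3e) = 0 := by
  simp only [phi, g3e, map_add, _root_.map_mul, map_sub, map_neg, map_pow, _root_.map_one, map_ofNat, aeval_X, substF_0, substF_1, substF_2, substF_3, substF_4, substF_5, substF_6, substF_7, substF_8, substF_9, substF_10, substF_11, substF_12, substF_13, substF_14, substF_15, substF_16, substF_17, subQ, subR, subT, subU]
  ring

lemma phig4 : phi (g4e) = 0 := by
  simp only [phi, g4e, map_add, _root_.map_mul, map_sub, map_neg, map_pow, _root_.map_one, map_ofNat, aeval_X, substF_0, substF_1, substF_2, substF_3, substF_4, substF_5, substF_6, substF_7, substF_8, substF_9, substF_10, substF_11, substF_12, substF_13, substF_14, substF_15, substF_16, substF_17, subQ, subR, subT, subU]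
  ring

lemma phig5 : phi (g5e) = 0 := by
  simp only [phi, g5e, map_add, _root_.map_mul, map_sub, map_neg, map_pow, _root_.map_one, map_ofNat, aeval_X, substF_0, substF_1, substF_2, substF_3, substF_4, substF_5, substF_6, substF_7, substF_8, substF_9, substF_10, substF_11, substF_12, substF_13, substF_14, substF_15, substF_16, substF_17, subQ, subR, subT, subU]
  ring

lemma phig6 : phi (g6e) = 0 := by
  simp only [phi, g6e, map_add, _root_.map_mul, map_sub, map_neg, map_pow, _root_.map_one, map_ofNat, aeval_X, substF_0, substF_1, substF_2, substF_3, substF_4, substF_5, substF_6, substF_7, substF_8, substF_9, substF_10, substF_11, substF_12, substF_13, substF_14, substF_15, substF_16, substF_17, subQ, subR, subT, subU]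
  ring

lemma phig7 : phi (g7e) = 0 := by
  simp only [phi, g7e, map_add, _root_.map_mul, map_sub, map_neg, map_pow, _root_.map_one, map_ofNat, aeval_X, substF_0, substF_1, substF_2, substF_3, substF_4, substF_5, substF_6, substF_7, substF_8, substF_9, substF_10, substF_11, substF_12, substF_13, substF_14, substF_15, substF_16, substF_17, subQ, subR, subT, subU]
  ring

lemma phig8 : phi (g8e) = 0 := by
  simp only [phi, g8e, map_add, _root_.map_mul, map_sub, map_neg, map_pow, _root_.map_one, map_ofNat, aeval_X, substF_0, substF_1, substF_2, substF_3, substF_4, substF_5, substF_6, substF_7, substF_8, substF_9, substF_10, substF_11, substF_12, substF_13, substF_14, substF_15, substF_16, substF_17, subQ, subR, subT, subU]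
  ring

lemma sub_aeval_mem (s : Fin 18 → SSigma) (f : SSigma) :
    f - aeval s f ∈ Ideal.span (Set.range fun i => (X i : SSigma) - s i) := by
  induction f using MvPolynomial.induction_on with
  | C a => simp [MvPolynomial.algebraMap_eq]
  | add f g hf hg =>
      have h := Ideal.add_mem _ hf hg
      have e : f + g - aeval s (f + g) = (f - aeval s f) + (g - aeval s g) := by
        rw [map_add]; ring
      rw [e]; exact h
  | mul_X f i hf =>
      have e : f * X i - aeval s (f * X i) =
          (f - aeval s f) * X i + aeval s f * (X i - s i) := by
        rw [_root_.map_mul, aeval_X]; ring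
      rw [e]
      exact Ideal.add_mem _ (Ideal.mul_mem_right _ _ hf)
        (Ideal.mul_mem_left _ _ (Ideal.subset_span ⟨i, rfl⟩))

def J : Ideal SSigma := ISigma ⊔ Ideal.span {(X 0 - 1 : SSigma)}

lemma hp1 : (X 0 : SSigma) - 1 ∈ J :=
  Ideal.mem_sup_right (Ideal.subset_span rfl)

lemma hgmem (k : Fin 9) : sigmaGens k ∈ J :=
  Ideal.mem_sup_left (Ideal.subset_span ⟨k, rfl⟩)

lemma hQmem : (X 4 : SSigma) - Qe ∈ J := by
  have e : (X 4 : SSigma) - Qe = g0e - X 4 * (X 0 - 1) := by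
    simp only [Qe, g0e]; ring
  rw [e, ← hgen0]
  exact Ideal.sub_mem _ (hgmem 0) (Ideal.mul_mem_left _ _ hp1)

lemma hRmem : (X 7 : SSigma) - Re ∈ J := by
  have e : (X 7 : SSigma) - Re = g1e - c7 * (X 0 - 1) := by
    simp only [Re, g1e, c7]; ring
  rw [e, ← hgen1]
  exact Ideal.sub_mem _ (hgmem 1) (Ideal.mul_mem_left _ _ hp1)

lemma hTmem : (X 9 : SSigma) - Te ∈ J := by
  have e : (X 9 : SSigma) - Te = g4e - c9 * (X 0 - 1) := by
    simp only [Te, g4e, c9]; ring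
  rw [e, ← hgen4]
  exact Ideal.sub_mem _ (hgmem 4) (Ideal.mul_mem_left _ _ hp1)

lemma hUmem : (X 8 : SSigma) - Ue ∈ J := by
  have e : (X 8 : SSigma) - Ue = (g5e - X 8 * (X 0 - 1)) +
      (ca * (X 4 - Qe) + cb * (X 7 - Re)) := by
    simp only [Ue, g5e, ca, cb, Qe, Re]; ring
  rw [e, ← hgen5]
  exact Ideal.add_mem _
    (Ideal.sub_mem _ (hgmem 5) (Ideal.mul_mem_left _ _ hp1))
    (Ideal.add_mem _ (Ideal.mul_mem_left _ _ hQmem) (Ideal.mul_mem_left _ _ hRmem))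

lemma hX0mem : (X 0 : SSigma) - sig 0 ∈ J := by rw [sig_0]; exact hp1

lemma hsm1 : (X 1 : SSigma) - sig 1 ∈ J := by rw [sig_1, sub_self]; exact J.zero_mem
lemma hsm2 : (X 2 : SSigma) - sig 2 ∈ J := by rw [sig_2, sub_self]; exact J.zero_mem
lemma hsm3 : (X 3 : SSigma) - sig 3 ∈ J := by rw [sig_3, sub_self]; exact J.zero_mem
lemma hsm4 : (X 4 : SSigma) - sig 4 ∈ J := by rw [sig_4]; exact hQmem
lemma hsm5 : (X 5 : SSigma) - sig 5 ∈ J := by rw [sig_5, sub_self]; exact J.zero_mem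
lemma hsm6 : (X 6 : SSigma) - sig 6 ∈ J := by rw [sig_6, sub_self]; exact J.zero_mem
lemma hsm7 : (X 7 : SSigma) - sig 7 ∈ J := by rw [sig_7]; exact hRmem
lemma hsm8 : (X 8 : SSigma) - sig 8 ∈ J := by rw [sig_8]; exact hUmem
lemma hsm9 : (X 9 : SSigma) - sig 9 ∈ J := by rw [sig_9]; exact hTmem
lemma hsm10 : (X 10 : SSigma) - sig 10 ∈ J := by rw [sig_10, sub_self]; exact J.zero_mem
lemma hsm11 : (X 11 : SSigma) - sig 11 ∈ J := by rw [sig_11, sub_self]; exact J.zero_mem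
lemma hsm12 : (X 12 : SSigma) - sig 12 ∈ J := by rw [sig_12, sub_self]; exact J.zero_mem
lemma hsm13 : (X 13 : SSigma) - sig 13 ∈ J := by rw [sig_13, sub_self]; exact J.zero_mem
lemma hsm14 : (X 14 : SSigma) - sig 14 ∈ J := by rw [sig_14, sub_self]; exact J.zero_mem
lemma hsm15 : (X 15 : SSigma) - sig 15 ∈ J := by rw [sig_15, sub_self]; exact J.zero_mem
lemma hsm16 : (X 16 : SSigma) - sig 16 ∈ J := by rw [sig_16, sub_self]; exact J.zero_mem
lemma hsm17 : (X 17 : SSigma) - sig 17 ∈ J := by rw [sig_17, sub_self]; exact J.zero_mem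

lemma hsigmem (i : Fin 18) : (X i : SSigma) - sig i ∈ J := by
  fin_cases i
  exacts [hX0mem, hsm1, hsm2, hsm3, hsm4, hsm5, hsm6, hsm7, hsm8, hsm9, hsm10, hsm11, hsm12, hsm13, hsm14, hsm15, hsm16, hsm17]

lemma hcomp : ((aeval emb).comp phi : SSigma →ₐ[ℂ] SSigma) = aeval sig := by
  apply MvPolynomial.algHom_ext
  intro i
  simp only [AlgHom.comp_apply, phi, aeval_X, sig]

lemma phim0 : phi (sigmaGens 0) = 0 := by rw [hgen0]; exact phig0
lemma phim1 : phi (sigmaGens 1) = 0 := by rw [hgen1]; exact phig1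
lemma phim2 : phi (sigmaGens 2) = 0 := by rw [hgen2]; exact phig2
lemma phim3 : phi (sigmaGens 3) = 0 := by rw [hgen3]; exact phig3
lemma phim4 : phi (sigmaGens 4) = 0 := by rw [hgen4]; exact phig4
lemma phim5 : phi (sigmaGens 5) = 0 := by rw [hgen5]; exact phig5
lemma phim6 : phi (sigmaGens 6) = 0 := by rw [hgen6]; exact phig6
lemma phim7 : phi (sigmaGens 7) = 0 := by rw [hgen7]; exact phig7
lemma phim8 : phi (sigmaGens 8) = 0 := by rw [hgen8]; exact phig8

lemma phigen (k : Fin 9) : phi (sigmaGens k) = 0 := by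
  fin_cases k
  exacts [phim0, phim1, phim2, phim3, phim4, phim5, phim6, phim7, phim8]

lemma hker : J = RingHom.ker phi := by
  apply le_antisymm
  · rw [J, sup_le_iff]
    constructor
    · rw [ISigma, Ideal.span_le]
      rintro x ⟨k, rfl⟩
      exact RingHom.mem_ker.mpr (phigen k)
    · rw [Ideal.span_le, Set.singleton_subset_iff]
      refine RingHom.mem_ker.mpr ?_
      simp [phi, substF_0]
  · intro f hf
    have h0 : aeval sig f = 0 := by
      have := congrArg (fun g => g f) hcomp
      simp only [AlgHom.comp_apply] at this
      rw [← this, RingHom.mem_ker.mp hf, map_zero]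
    have hm := sub_aeval_mem sig f
    rw [h0, sub_zero] at hm
    refine Ideal.span_le.2 ?_ hm
    rintro x ⟨i, rfl⟩
    exact hsigmem i

lemma hpe0 : phi (emb 0) = X 0 := by rw [emb_0]; simp only [phi, aeval_X, substF_1]
lemma hpe1 : phi (emb 1) = X 1 := by rw [emb_1]; simp only [phi, aeval_X, substF_2]
lemma hpe2 : phi (emb 2) = X 2 := by rw [emb_2]; simp only [phi, aeval_X, substF_3]
lemma hpe3 : phi (emb 3) = X 3 := by rw [emb_3]; simp only [phi, aeval_X, substF_5]
lemma hpe4 : phi (emb 4) = X 4 := by rw [emb_4]; simp only [phi, aeval_X, substF_6]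
lemma hpe5 : phi (emb 5) = X 5 := by rw [emb_5]; simp only [phi, aeval_X, substF_10]
lemma hpe6 : phi (emb 6) = X 6 := by rw [emb_6]; simp only [phi, aeval_X, substF_11]
lemma hpe7 : phi (emb 7) = X 7 := by rw [emb_7]; simp only [phi, aeval_X, substF_12]
lemma hpe8 : phi (emb 8) = X 8 := by rw [emb_8]; simp only [phi, aeval_X, substF_13]
lemma hpe9 : phi (emb 9) = X 9 := by rw [emb_9]; simp only [phi, aeval_X, substF_14]
lemma hpe10 : phi (emb 10) = X 10 := by rw [emb_10]; simp only [phi, aeval_X, substF_15]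
lemma hpe11 : phi (emb 11) = X 11 := by rw [emb_11]; simp only [phi, aeval_X, substF_16]
lemma hpe12 : phi (emb 12) = X 12 := by rw [emb_12]; simp only [phi, aeval_X, substF_17]

lemma hphiemb (j : Fin 13) : phi (emb j) = X j := by
  fin_cases j
  exacts [hpe0, hpe1, hpe2, hpe3, hpe4, hpe5, hpe6, hpe7, hpe8, hpe9, hpe10, hpe11, hpe12]

lemma hsurj : Function.Surjective phi := by
  intro f
  induction f using MvPolynomial.induction_on with
  | C a => exact ⟨C a, by simp [phi, MvPolynomial.algebraMap_eq]⟩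
  | add f g hf hg =>
      obtain ⟨a, ha⟩ := hf
      obtain ⟨b, hb⟩ := hg
      exact ⟨a + b, by rw [_root_.map_add, ha, hb]⟩
  | mul_X f j hf =>
      obtain ⟨a, ha⟩ := hf
      exact ⟨a * emb j, by rw [_root_.map_mul, ha, hphiemb j]⟩

end SigmaChartAux

/-- The quotient ring `S_Σ/(I_Σ + (p₁ − 1))` is isomorphic as a ℂ-algebra to the
polynomial ring over ℂ in 13 variables (the chart `p₁ = 1` of `Σ¹⁴_𝔸` is isomorphic to
affine 13-space: the coordinates `q₁, r, u, s₁₁` can be regularly eliminated). -/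
theorem sigma_p1_chart_iso_affine13 :
    Nonempty ((SSigma ⧸ (ISigma ⊔ Ideal.span {(X 0 - 1 : SSigma)})) ≃ₐ[ℂ]
      MvPolynomial (Fin 13) ℂ) := by
  open SigmaChartAux in
  exact ⟨(Ideal.quotientEquivAlgOfEq ℂ SigmaChartAux.hker).trans
    (Ideal.quotientKerAlgEquivOfSurjective SigmaChartAux.hsurj)⟩
end
end

section
/- The quotient ring S_Σ/(I_Σ + (u − 1)) is isomorphic as a ℂ-algebra to the polynomial ring over ℂ in the 13 variables q₁,q₂,q₃,r,s₁₁,s₁₂,s₁₃,s₂₂,s₂₃,s₃₃,t₁,t₂,t₃ (that is, on the chart u = 1 of Σ¹⁴_𝔸, the coordinates p₁, p₂, p₃, p₄ can be regularly eliminated and the chart is isomorphic to affine 13-space). -/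
/-!
`S_Σ = ℂ[p₁,p₂,p₃,p₄,q₁,q₂,q₃,r,u,s₁₁,s₁₂,s₁₃,s₂₂,s₂₃,s₃₃,t₁,t₂,t₃]` is the polynomial
ring in 18 variables, indexed by `Fin 18` in this order.  Writing `p`, `q`, `t` for the
corresponding column vectors, `S` for the symmetric matrix with entries `sᵢⱼ`, `A` for the
skew-symmetric matrix attached to `q`, `S†` for the adjugate of `S`,
`(F₁,F₂,F₃)ᵗ = (rI − AS)·A·t` and `F₄ = −(r² + qᵗ·S†·q)`, the ideal `I_Σ` is generated by
the nine polynomials `pᵗ·q`, the three entries of `(rI + AS)·p + p₄·A·t`,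
`pᵗ·S·p + p₄·pᵗ·t`, the three entries of `u·p − (F₁,F₂,F₃)ᵗ`, and `u·p₄ − F₄`.
`R_Σ = S_Σ/I_Σ`.
-/

open MvPolynomial Matrix

noncomputable section

/-!
On the chart `u = 1` the last four generators of `I_Σ` read `p = F(q, r, S, t)` and
`p₄ = F₄(q, r, S)`, so `p` and `p₄` can be eliminated. What has to be checked is that
`(p, p₄) = (F, F₄)` satisfies the first five equations identically: these are polynomial
identities in `q, r, S, t`, valid over any commutative ring once `S` is symmetric. Hence the
substitution `p ↦ F, p₄ ↦ F₄, u ↦ 1` is a retraction of `S_Σ` onto the polynomial ring in the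
remaining 13 variables, and its kernel is exactly `I_Σ + (u − 1)`.
-/

section Retraction

variable {R A B : Type*} [CommSemiring R] [CommRing A] [CommRing B] [Algebra R A] [Algebra R B]

theorem Ideal.eq_ker_of_comp_mkₐ_eq {J : Ideal A} (φ : A →ₐ[R] B) (ψ : B →ₐ[R] A)
    (hJ : J ≤ RingHom.ker φ)
    (hψφ : (Ideal.Quotient.mkₐ R J).comp (ψ.comp φ) = Ideal.Quotient.mkₐ R J) :
    J = RingHom.ker φ := by
  refine le_antisymm hJ fun a ha => ?_
  have h := AlgHom.congr_fun hψφ a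
  simp only [AlgHom.comp_apply, (RingHom.mem_ker).mp ha, map_zero,
    Ideal.Quotient.mkₐ_eq_mk] at h
  exact Ideal.Quotient.eq_zero_iff_mem.mp h.symm

def Ideal.quotientAlgEquivOfSection {J : Ideal A} (φ : A →ₐ[R] B) (ψ : B →ₐ[R] A)
    (hφψ : φ.comp ψ = AlgHom.id R B) (hJ : J ≤ RingHom.ker φ)
    (hψφ : (Ideal.Quotient.mkₐ R J).comp (ψ.comp φ) = Ideal.Quotient.mkₐ R J) :
    (A ⧸ J) ≃ₐ[R] B :=
  (Ideal.quotientEquivAlgOfEq R (Ideal.eq_ker_of_comp_mkₐ_eq φ ψ hJ hψφ)).trans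
    (Ideal.quotientKerAlgEquivOfRightInverse (g := ψ) (AlgHom.congr_fun hφψ))

end Retraction

section SigmaEquations

variable {R R' : Type*} [CommRing R] [CommRing R']

def skewMatrix (q : Fin 3 → R) : Matrix (Fin 3) (Fin 3) R :=
  !![0, -q 2, q 1; q 2, 0, -q 0; -q 1, q 0, 0]

def sigmaF (r : R) (q : Fin 3 → R) (S : Matrix (Fin 3) (Fin 3) R) (t : Fin 3 → R) : Fin 3 → R :=
  (r • (1 : Matrix (Fin 3) (Fin 3) R) - skewMatrix q * S) *ᵥ (skewMatrix q *ᵥ t)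

def sigmaF4 (r : R) (q : Fin 3 → R) (S : Matrix (Fin 3) (Fin 3) R) : R :=
  -(r ^ 2 + q ⬝ᵥ (S.adjugate *ᵥ q))

def sigmaRel (p : Fin 3 → R) (p₄ : R) (q : Fin 3 → R) (r u : R) (S : Matrix (Fin 3) (Fin 3) R)
    (t : Fin 3 → R) : Fin 9 → R :=
  ![p ⬝ᵥ q,
    ((r • (1 : Matrix (Fin 3) (Fin 3) R) + skewMatrix q * S) *ᵥ p + p₄ • (skewMatrix q *ᵥ t)) 0,
    ((r • (1 : Matrix (Fin 3) (Fin 3) R) + skewMatrix q * S) *ᵥ p + p₄ • (skewMatrix q *ᵥ t)) 1,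
    ((r • (1 : Matrix (Fin 3) (Fin 3) R) + skewMatrix q * S) *ᵥ p + p₄ • (skewMatrix q *ᵥ t)) 2,
    p ⬝ᵥ (S *ᵥ p) + p₄ * (p ⬝ᵥ t),
    (u • p - sigmaF r q S t) 0,
    (u • p - sigmaF r q S t) 1,
    (u • p - sigmaF r q S t) 2,
    u * p₄ - sigmaF4 r q S]

theorem map_skewMatrix (f : R →+* R') (q : Fin 3 → R) :
    (skewMatrix q).map f = skewMatrix (f ∘ q) := by
  ext i j
  fin_cases i <;> fin_cases j <;> simp [skewMatrix]

theorem map_sigmaF (f : R →+* R') (r : R) (q : Fin 3 → R) (S : Matrix (Fin 3) (Fin 3) R)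
    (t : Fin 3 → R) (i : Fin 3) :
    f (sigmaF r q S t i) = sigmaF (f r) (f ∘ q) (S.map f) (f ∘ t) i := by
  simp [sigmaF, RingHom.map_mulVec, Function.comp_def, map_skewMatrix, Matrix.map_mul,
    Matrix.map_sub, Matrix.map_smul']

theorem map_sigmaF4 (f : R →+* R') (r : R) (q : Fin 3 → R) (S : Matrix (Fin 3) (Fin 3) R) :
    f (sigmaF4 r q S) = sigmaF4 (f r) (f ∘ q) (S.map f) := by
  simp [sigmaF4, RingHom.map_dotProduct, RingHom.map_mulVec, Function.comp_def,
    ← RingHom.mapMatrix_apply, ← RingHom.map_adjugate]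

theorem map_sigmaRel (f : R →+* R') (p : Fin 3 → R) (p₄ : R) (q : Fin 3 → R) (r u : R)
    (S : Matrix (Fin 3) (Fin 3) R) (t : Fin 3 → R) :
    f ∘ sigmaRel p p₄ q r u S t =
      sigmaRel (f ∘ p) (f p₄) (f ∘ q) (f r) (f u) (S.map f) (f ∘ t) := by
  funext k
  fin_cases k <;>
    simp [sigmaRel, RingHom.map_dotProduct, RingHom.map_mulVec, Function.comp_def,
      map_skewMatrix, Matrix.map_mul, Matrix.map_add, Matrix.map_smul', map_sigmaF4, map_sigmaF]

theorem sigmaF_dotProduct_eq_zero (r : R) (q : Fin 3 → R) (S : Matrix (Fin 3) (Fin 3) R)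
    (t : Fin 3 → R) : sigmaF r q S t ⬝ᵥ q = 0 := by
  simp [sigmaF, skewMatrix, mulVec, vecMul, dotProduct, Fin.sum_univ_three, one_fin_three]
  ring

theorem sigmaF_linear_eq_zero (r : R) (q : Fin 3 → R) {S : Matrix (Fin 3) (Fin 3) R}
    (hS : S.IsSymm) (t : Fin 3 → R) :
    (r • (1 : Matrix (Fin 3) (Fin 3) R) + skewMatrix q * S) *ᵥ sigmaF r q S t +
      sigmaF4 r q S • (skewMatrix q *ᵥ t) = 0 := by
  rw [eta_fin_three S, hS.apply 0 1, hS.apply 0 2, hS.apply 1 2]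
  ext i
  fin_cases i <;>
    simp [sigmaF, sigmaF4, skewMatrix, mulVec, dotProduct, Fin.sum_univ_three, one_fin_three,
      adjugate_fin_three] <;>
    ring

theorem sigmaF_quadric_eq_zero (r : R) (q : Fin 3 → R) {S : Matrix (Fin 3) (Fin 3) R}
    (hS : S.IsSymm) (t : Fin 3 → R) :
    sigmaF r q S t ⬝ᵥ (S *ᵥ sigmaF r q S t) + sigmaF4 r q S * (sigmaF r q S t ⬝ᵥ t) = 0 := by
  rw [eta_fin_three S, hS.apply 0 1, hS.apply 0 2, hS.apply 1 2]
  simp [sigmaF, sigmaF4, skewMatrix, mulVec, dotProduct, Fin.sum_univ_three, one_fin_three,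
    adjugate_fin_three]
  ring

theorem sigmaRel_sigmaF_eq_zero (r : R) (q : Fin 3 → R) {S : Matrix (Fin 3) (Fin 3) R}
    (hS : S.IsSymm) (t : Fin 3 → R) :
    sigmaRel (sigmaF r q S t) (sigmaF4 r q S) q r 1 S t = 0 := by
  have hlin := sigmaF_linear_eq_zero r q hS t
  funext k
  fin_cases k
  · exact sigmaF_dotProduct_eq_zero r q S t
  · exact congrFun hlin 0
  · exact congrFun hlin 1
  · exact congrFun hlin 2
  · exact sigmaF_quadric_eq_zero r q hS t
  all_goals simp [sigmaRel]

end SigmaEquations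

theorem sigmaGens_eq_sigmaRel : sigmaGens = sigmaRel pVec (X 3) qVec (X 7) (X 8) Smat tVec := rfl

theorem Fvec_eq_sigmaF : Fvec = sigmaF (X 7) qVec Smat tVec := rfl

theorem F4_eq_sigmaF4 : F4 = sigmaF4 (X 7) qVec Smat := rfl

def chartQ : Fin 3 → MvPolynomial (Fin 13) ℂ := ![X 0, X 1, X 2]

def chartR : MvPolynomial (Fin 13) ℂ := X 3

def chartS : Matrix (Fin 3) (Fin 3) (MvPolynomial (Fin 13) ℂ) :=
  !![X 4, X 5, X 6; X 5, X 7, X 8; X 6, X 8, X 9]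

def chartT : Fin 3 → MvPolynomial (Fin 13) ℂ := ![X 10, X 11, X 12]

theorem chartS_isSymm : chartS.IsSymm := by
  ext i j
  fin_cases i <;> fin_cases j <;> rfl

def chartRetraction : SSigma →ₐ[ℂ] MvPolynomial (Fin 13) ℂ :=
  aeval ![sigmaF chartR chartQ chartS chartT 0, sigmaF chartR chartQ chartS chartT 1,
    sigmaF chartR chartQ chartS chartT 2, sigmaF4 chartR chartQ chartS,
    X 0, X 1, X 2, X 3, 1, X 4, X 5, X 6, X 7, X 8, X 9, X 10, X 11, X 12]

def chartInclusion : MvPolynomial (Fin 13) ℂ →ₐ[ℂ] SSigma :=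
  aeval ![X 4, X 5, X 6, X 7, X 9, X 10, X 11, X 12, X 13, X 14, X 15, X 16, X 17]

theorem chartRetraction_comp_chartInclusion :
    chartRetraction.comp chartInclusion = AlgHom.id ℂ (MvPolynomial (Fin 13) ℂ) := by
  ext j
  fin_cases j <;> simp [chartRetraction, chartInclusion]

theorem chartRetraction_sigmaGens (k : Fin 9) : chartRetraction (sigmaGens k) = 0 := by
  have hp : ⇑chartRetraction ∘ pVec = sigmaF chartR chartQ chartS chartT := by
    funext i; fin_cases i <;> simp [chartRetraction, pVec]
  have hq : ⇑chartRetraction ∘ qVec = chartQ := by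
    funext i; fin_cases i <;> simp [chartRetraction, qVec, chartQ]
  have hS : Smat.map chartRetraction = chartS := by
    ext i j; fin_cases i <;> fin_cases j <;> simp [chartRetraction, Smat, chartS]
  have ht : ⇑chartRetraction ∘ tVec = chartT := by
    funext i; fin_cases i <;> simp [chartRetraction, tVec, chartT]
  have h := congrFun (map_sigmaRel (chartRetraction : SSigma →+* MvPolynomial (Fin 13) ℂ)
    pVec (X 3) qVec (X 7) (X 8) Smat tVec) k
  simp only [RingHom.coe_coe, Function.comp_apply, ← sigmaGens_eq_sigmaRel] at h
  rw [h, hp, hq, hS, ht]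
  simp [chartRetraction, chartR, sigmaRel_sigmaF_eq_zero _ _ chartS_isSymm]

theorem ISigma_sup_le_ker_chartRetraction :
    ISigma ⊔ Ideal.span {(X 8 - 1 : SSigma)} ≤ RingHom.ker chartRetraction := by
  refine sup_le (Ideal.span_le.mpr ?_) (Ideal.span_le.mpr ?_)
  · rintro _ ⟨k, rfl⟩
    exact chartRetraction_sigmaGens k
  · rintro _ rfl
    simp [chartRetraction]

def chartSubst : Fin 18 → SSigma :=
  ![Fvec 0, Fvec 1, Fvec 2, F4, X 4, X 5, X 6, X 7, 1,
    X 9, X 10, X 11, X 12, X 13, X 14, X 15, X 16, X 17]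

theorem chartInclusion_chartRetraction_X (i : Fin 18) :
    chartInclusion (chartRetraction (X i)) = chartSubst i := by
  have hq : ⇑chartInclusion ∘ chartQ = qVec := by
    funext i; fin_cases i <;> simp [chartInclusion, qVec, chartQ]
  have hS : chartS.map chartInclusion = Smat := by
    ext i j; fin_cases i <;> fin_cases j <;> simp [chartInclusion, Smat, chartS]
  have ht : ⇑chartInclusion ∘ chartT = tVec := by
    funext i; fin_cases i <;> simp [chartInclusion, tVec, chartT]
  have hr : chartInclusion chartR = X 7 := by simp [chartInclusion, chartR]
  have hF (j : Fin 3) : chartInclusion (sigmaF chartR chartQ chartS chartT j) = Fvec j := by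
    rw [← AlgHom.coe_toRingHom, map_sigmaF]
    simp only [AlgHom.coe_toRingHom, hq, hS, ht, hr, Fvec_eq_sigmaF]
  have hF4 : chartInclusion (sigmaF4 chartR chartQ chartS) = F4 := by
    rw [← AlgHom.coe_toRingHom, map_sigmaF4]
    simp only [AlgHom.coe_toRingHom, hq, hS, hr, F4_eq_sigmaF4]
  fin_cases i <;> simp [chartRetraction, chartSubst, hF, hF4] <;> simp [chartInclusion]

theorem mk_chartSubst (i : Fin 18) :
    Ideal.Quotient.mk (ISigma ⊔ Ideal.span {(X 8 - 1 : SSigma)}) (chartSubst i) =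
      Ideal.Quotient.mk _ (X i) := by
  set J := ISigma ⊔ Ideal.span {(X 8 - 1 : SSigma)}
  have hu : Ideal.Quotient.mk J (X 8) = 1 := by
    rw [← map_one (Ideal.Quotient.mk J), Ideal.Quotient.eq]
    exact Ideal.mem_sup_right (Ideal.subset_span rfl)
  have hgen (k : Fin 9) : Ideal.Quotient.mk J (sigmaGens k) = 0 :=
    Ideal.Quotient.eq_zero_iff_mem.mpr (Ideal.mem_sup_left (Ideal.subset_span ⟨k, rfl⟩))
  have hp₀ : Ideal.Quotient.mk J (X 0) = Ideal.Quotient.mk J (Fvec 0) := by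
    simpa [sigmaGens, pVec, hu, sub_eq_zero] using hgen 5
  have hp₁ : Ideal.Quotient.mk J (X 1) = Ideal.Quotient.mk J (Fvec 1) := by
    simpa [sigmaGens, pVec, hu, sub_eq_zero] using hgen 6
  have hp₂ : Ideal.Quotient.mk J (X 2) = Ideal.Quotient.mk J (Fvec 2) := by
    simpa [sigmaGens, pVec, hu, sub_eq_zero] using hgen 7
  have hp₄ : Ideal.Quotient.mk J (X 3) = Ideal.Quotient.mk J F4 := by
    simpa [sigmaGens, hu, sub_eq_zero] using hgen 8
  fin_cases i <;> simp [chartSubst, hp₀, hp₁, hp₂, hp₄, hu]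

/-- The quotient ring `S_Σ/(I_Σ + (u − 1))` is isomorphic as a ℂ-algebra to the
polynomial ring over ℂ in 13 variables (the chart `u = 1` of `Σ¹⁴_𝔸` is isomorphic to
affine 13-space: the coordinates `p₁, p₂, p₃, p₄` can be regularly eliminated). -/
theorem sigma_u_chart_iso_affine13 :
    Nonempty ((SSigma ⧸ (ISigma ⊔ Ideal.span {(X 8 - 1 : SSigma)})) ≃ₐ[ℂ]
      MvPolynomial (Fin 13) ℂ) := by
  refine ⟨Ideal.quotientAlgEquivOfSection chartRetraction chartInclusion
    chartRetraction_comp_chartInclusion ISigma_sup_le_ker_chartRetraction ?_⟩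
  ext i
  simp [chartInclusion_chartRetraction_X, mk_chartSubst]
end
end

section
/- For arbitrary integers a₁, a₂, a₃, b, c, e, assign to the 18 variables the integer weights w(pᵢ) = aᵢ (i = 1,2,3), w(qᵢ) = b − aᵢ, w(r) = c, w(u) = e, w(p₄) = 2c − e, w(s₁₂) = c − (b − a₃), w(s₁₃) = c − (b − a₂), w(s₂₃) = c − (b − a₁), w(s₁₁) = c + a₂ − a₁ − (b − a₃), w(s₂₂) = c + a₃ − a₂ − (b − a₁), w(s₃₃) = c + a₁ − a₃ − (b − a₂), w(t₁) = e + a₂ − c − (b − a₃), w(t₂) = e + a₃ − c − (b − a₁), w(t₃) = e + a₁ − c − (b − a₂). Then each of the nine generators of I_Σ is weighted homogeneous, of respective degrees d₀ = b; d₁ = c + a₁, d₂ = c + a₂, d₃ = c + a₃ (the three entries of (rI + AS)p + p₄·At); d₄ = c + a₁ + a₂ + a₃ − b (for pᵗSp + p₄·pᵗt); d₅ = e + a₁, d₆ = e + a₂, d₇ = e + a₃ (the three entries of up − (F₁,F₂,F₃)ᵗ); and d₈ = 2c (for up₄ − F₄). Moreover d₀ + d₁ + ⋯ + d₈ = 3δ,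 where δ := 2c + e + a₁ + a₂ + a₃. -/
/-!
`S_Σ = ℂ[p₁,p₂,p₃,p₄,q₁,q₂,q₃,r,u,s₁₁,s₁₂,s₁₃,s₂₂,s₂₃,s₃₃,t₁,t₂,t₃]` is the polynomial
ring in 18 variables, indexed by `Fin 18` in this order.  Writing `p`, `q`, `t` for the
corresponding column vectors, `S` for the symmetric matrix with entries `sᵢⱼ`, `A` for the
skew-symmetric matrix attached to `q`, `S†` for the adjugate of `S`,
`(F₁,F₂,F₃)ᵗ = (rI − AS)·A·t` and `F₄ = −(r² + qᵗ·S†·q)`, the ideal `I_Σ` is generated by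
the nine polynomials `pᵗ·q`, the three entries of `(rI + AS)·p + p₄·A·t`,
`pᵗ·S·p + p₄·pᵗ·t`, the three entries of `u·p − (F₁,F₂,F₃)ᵗ`, and `u·p₄ − F₄`.
`R_Σ = S_Σ/I_Σ`.
-/

open MvPolynomial Matrix

noncomputable section

/-- The weight assignment on the 18 variables determined by integers `a₁, a₂, a₃, b, c, e`:
`w(pᵢ) = aᵢ`, `w(qᵢ) = b − aᵢ`, `w(r) = c`, `w(u) = e`, `w(p₄) = 2c − e`,
`w(s₁₂) = c − (b − a₃)`, `w(s₁₃) = c − (b − a₂)`, `w(s₂₃) = c − (b − a₁)`,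
`w(s₁₁) = c + a₂ − a₁ − (b − a₃)`, `w(s₂₂) = c + a₃ − a₂ − (b − a₁)`,
`w(s₃₃) = c + a₁ − a₃ − (b − a₂)`, `w(t₁) = e + a₂ − c − (b − a₃)`,
`w(t₂) = e + a₃ − c − (b − a₁)`, `w(t₃) = e + a₁ − c − (b − a₂)`. -/
def wt (a₁ a₂ a₃ b c e : ℤ) : Fin 18 → ℤ :=
  ![a₁, a₂, a₃, 2 * c - e, b - a₁, b - a₂, b - a₃, c, e,
    c + a₂ - a₁ - (b - a₃), c - (b - a₃), c - (b - a₂),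
    c + a₃ - a₂ - (b - a₁), c - (b - a₁), c + a₁ - a₃ - (b - a₂),
    e + a₂ - c - (b - a₃), e + a₃ - c - (b - a₁), e + a₁ - c - (b - a₂)]


/-!
All the matrices and vectors in the generators are graded.  With `s = a₁ + a₂ + a₃`, the
entries `pᵢ`, `qᵢ`, `tᵢ` have degrees `aᵢ`, `b − aᵢ`, `(e − c − b + s) − aᵢ`, and the entries
`Sᵢⱼ`, `Aᵢⱼ` have degrees `(c − b + s) − aᵢ − aⱼ` and `(b − s) + aᵢ + aⱼ`.  Call a matrix graded
of type `(d, λ, μ)` when its `(i, j)` entry has degree `d + λᵢ − μⱼ`.  This shape is preserved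
by sums, products and matrix–vector products, contracting the inner index, and by the adjugate,
which by the Leibniz formula has type `((n − 1) d + Σλ − Σμ, μ, λ)`.  Hence every generator is
homogeneous, and its degree is obtained by adding up offsets: for instance `AS` has type
`(c, a, a)`, the same as `rI`, and `qᵗ S† q` has degree `2c`, the same as `r²`.
-/

namespace MvPolynomial

theorem isWeightedHomogeneous_X_of_eq {σ R M : Type*} [CommSemiring R] [AddCommMonoid M]
    {w : σ → M} {i : σ} {d : M} (h : w i = d) :
    IsWeightedHomogeneous w (X i : MvPolynomial σ R) d :=
  h ▸ isWeightedHomogeneous_X R w i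

section Graded

variable {σ R M m n l : Type*} [AddCommGroup M]

def IsWeightedHomogeneousMatrix [CommSemiring R] (w : σ → M) (A : Matrix m n (MvPolynomial σ R))
    (d : M) (row : m → M) (col : n → M) : Prop :=
  ∀ i j, IsWeightedHomogeneous w (A i j) (d + row i - col j)

def IsWeightedHomogeneousVector [CommSemiring R] (w : σ → M) (v : n → MvPolynomial σ R)
    (d : M) (deg : n → M) : Prop :=
  ∀ i, IsWeightedHomogeneous w (v i) (d + deg i)

section CommSemiring

variable [CommSemiring R] {w : σ → M} {d e : M} {row : m → M} {col μ : n → M}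

theorem IsWeightedHomogeneousVector.dotProduct [Fintype n] {u v : n → MvPolynomial σ R}
    (hu : IsWeightedHomogeneousVector w u d μ) (hv : IsWeightedHomogeneousVector w v e (-μ)) :
    IsWeightedHomogeneous w (u ⬝ᵥ v) (d + e) :=
  IsWeightedHomogeneous.sum _ _ _ fun i _ ↦ by
    simpa [add_add_add_comm] using (hu i).mul (hv i)

theorem IsWeightedHomogeneousVector.add {u v : n → MvPolynomial σ R}
    (hu : IsWeightedHomogeneousVector w u d μ) (hv : IsWeightedHomogeneousVector w v d μ) :
    IsWeightedHomogeneousVector w (u + v) d μ :=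
  fun i ↦ (hu i).add (hv i)

theorem IsWeightedHomogeneousVector.smul {φ : MvPolynomial σ R} {v : n → MvPolynomial σ R}
    (hφ : IsWeightedHomogeneous w φ d) (hv : IsWeightedHomogeneousVector w v e μ) :
    IsWeightedHomogeneousVector w (φ • v) (d + e) μ :=
  fun i ↦ by simpa [add_assoc] using hφ.mul (hv i)

theorem IsWeightedHomogeneousMatrix.add {A B : Matrix m n (MvPolynomial σ R)}
    (hA : IsWeightedHomogeneousMatrix w A d row col)
    (hB : IsWeightedHomogeneousMatrix w B d row col) :
    IsWeightedHomogeneousMatrix w (A + B) d row col :=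
  fun i j ↦ (hA i j).add (hB i j)

theorem IsWeightedHomogeneousMatrix.mulVec [Fintype n] {A : Matrix m n (MvPolynomial σ R)}
    {v : n → MvPolynomial σ R} (hA : IsWeightedHomogeneousMatrix w A d row col)
    (hv : IsWeightedHomogeneousVector w v e col) :
    IsWeightedHomogeneousVector w (A *ᵥ v) (d + e) row :=
  fun i ↦ IsWeightedHomogeneous.sum _ _ _ fun j _ ↦ by
    convert (hA i j).mul (hv j) using 1; abel

theorem IsWeightedHomogeneousMatrix.mul [Fintype n] {A : Matrix m n (MvPolynomial σ R)}
    {B : Matrix n l (MvPolynomial σ R)} {ν : l → M}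
    (hA : IsWeightedHomogeneousMatrix w A d row col)
    (hB : IsWeightedHomogeneousMatrix w B e col ν) :
    IsWeightedHomogeneousMatrix w (A * B) (d + e) row ν :=
  fun i k ↦ IsWeightedHomogeneous.sum _ _ _ fun j _ ↦ by
    convert (hA i j).mul (hB j k) using 1; abel

theorem isWeightedHomogeneousMatrix_smul_one [DecidableEq n] {φ : MvPolynomial σ R}
    (hφ : IsWeightedHomogeneous w φ d) (μ : n → M) :
    IsWeightedHomogeneousMatrix w (φ • (1 : Matrix n n (MvPolynomial σ R))) d μ μ := by
  intro i j
  rcases eq_or_ne i j with rfl | hij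
  · simpa using hφ
  · simpa [hij] using isWeightedHomogeneous_zero R w _

end CommSemiring

section CommRing

variable [CommRing R] {w : σ → M} {d e : M} {row : m → M} {col μ : n → M}

theorem IsWeightedHomogeneousVector.sub {u v : n → MvPolynomial σ R}
    (hu : IsWeightedHomogeneousVector w u d μ) (hv : IsWeightedHomogeneousVector w v d μ) :
    IsWeightedHomogeneousVector w (u - v) d μ :=
  fun i ↦ (hu i).sub (hv i)

theorem IsWeightedHomogeneousMatrix.sub {A B : Matrix m n (MvPolynomial σ R)}
    (hA : IsWeightedHomogeneousMatrix w A d row col)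
    (hB : IsWeightedHomogeneousMatrix w B d row col) :
    IsWeightedHomogeneousMatrix w (A - B) d row col :=
  fun i j ↦ (hA i j).sub (hB i j)

theorem IsWeightedHomogeneousMatrix.det [Fintype n] [DecidableEq n]
    {A : Matrix n n (MvPolynomial σ R)} {row : n → M}
    (hA : IsWeightedHomogeneousMatrix w A d row col) :
    IsWeightedHomogeneous w A.det (Fintype.card n • d + ∑ i, row i - ∑ i, col i) := by
  rw [Matrix.det_apply]
  refine IsWeightedHomogeneous.sum _ _ _ fun τ _ ↦ ?_
  rw [Units.smul_def]
  refine (weightedHomogeneousSubmodule R w _).smul_of_tower_mem _ ?_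
  have hprod :=
    IsWeightedHomogeneous.prod Finset.univ (fun i ↦ A (τ i) i) _ fun i _ ↦ hA (τ i) i
  convert hprod using 1
  rw [Finset.sum_sub_distrib, Finset.sum_add_distrib, Equiv.sum_comp τ row]
  simp

theorem IsWeightedHomogeneousMatrix.adjugate [Fintype n] [DecidableEq n]
    {A : Matrix n n (MvPolynomial σ R)} {row : n → M}
    (hA : IsWeightedHomogeneousMatrix w A d row col) :
    IsWeightedHomogeneousMatrix w A.adjugate
      ((Fintype.card n - 1) • d + ∑ i, row i - ∑ i, col i) col row := by
  intro i j
  have hupd : IsWeightedHomogeneousMatrix w (A.updateRow j (Pi.single i 1)) d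
      (Function.update row j (col i - d)) col := by
    intro k l
    rcases eq_or_ne k j with rfl | hkj
    · rcases eq_or_ne l i with rfl | hli
      · simpa using isWeightedHomogeneous_one R w
      · simpa [hli] using isWeightedHomogeneous_zero R w _
    · simpa [hkj] using hA k l
  rw [Matrix.adjugate_apply]
  convert hupd.det using 1
  rw [Finset.sum_update_of_mem (Finset.mem_univ j),
    ← Finset.add_sum_erase _ _ (Finset.mem_univ j)]
  have hcard : Fintype.card n = (Fintype.card n - 1) + 1 :=
    (Nat.sub_add_cancel (Fintype.card_pos_iff.mpr ⟨i⟩)).symm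
  rw [hcard, succ_nsmul, Nat.add_sub_cancel, Finset.sdiff_singleton_eq_erase]
  abel

end CommRing

end Graded

end MvPolynomial

section SigmaGrading

variable (a₁ a₂ a₃ b c e : ℤ)

theorem isWeightedHomogeneousVector_pVec :
    IsWeightedHomogeneousVector (wt a₁ a₂ a₃ b c e) pVec 0 ![a₁, a₂, a₃] := by
  intro i
  fin_cases i <;> exact isWeightedHomogeneous_X_of_eq (by simp [wt])

theorem isWeightedHomogeneousVector_qVec :
    IsWeightedHomogeneousVector (wt a₁ a₂ a₃ b c e) qVec b (-![a₁, a₂, a₃]) := by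
  intro i
  fin_cases i <;> exact isWeightedHomogeneous_X_of_eq (by simp [wt]; ring)

theorem isWeightedHomogeneousVector_tVec :
    IsWeightedHomogeneousVector (wt a₁ a₂ a₃ b c e) tVec (e - c - b + (a₁ + a₂ + a₃))
      (-![a₁, a₂, a₃]) := by
  intro i
  fin_cases i <;> exact isWeightedHomogeneous_X_of_eq (by simp [wt]; ring)

theorem isWeightedHomogeneousMatrix_Smat :
    IsWeightedHomogeneousMatrix (wt a₁ a₂ a₃ b c e) Smat (c - b + (a₁ + a₂ + a₃))
      (-![a₁, a₂, a₃]) ![a₁, a₂, a₃] := by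
  intro i j
  fin_cases i <;> fin_cases j <;> exact isWeightedHomogeneous_X_of_eq (by simp [wt]; ring)

theorem isWeightedHomogeneousMatrix_Amat :
    IsWeightedHomogeneousMatrix (wt a₁ a₂ a₃ b c e) Amat (b - (a₁ + a₂ + a₃))
      ![a₁, a₂, a₃] (-![a₁, a₂, a₃]) := by
  intro i j
  fin_cases i <;> fin_cases j <;>
    simp only [Amat, of_apply, cons_val', empty_val', cons_val_fin_one]
  all_goals first
    | exact isWeightedHomogeneous_zero ℂ _ _
    | exact (isWeightedHomogeneous_X_of_eq (by simp [wt]; ring)).neg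
    | exact isWeightedHomogeneous_X_of_eq (by simp [wt]; ring)

theorem isWeightedHomogeneous_p₄ :
    IsWeightedHomogeneous (wt a₁ a₂ a₃ b c e) (X 3 : SSigma) (2 * c - e) :=
  isWeightedHomogeneous_X ℂ _ 3

theorem isWeightedHomogeneous_r : IsWeightedHomogeneous (wt a₁ a₂ a₃ b c e) (X 7 : SSigma) c :=
  isWeightedHomogeneous_X ℂ _ 7

theorem isWeightedHomogeneous_u : IsWeightedHomogeneous (wt a₁ a₂ a₃ b c e) (X 8 : SSigma) e :=
  isWeightedHomogeneous_X ℂ _ 8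

theorem isWeightedHomogeneousMatrix_Amat_mul_Smat :
    IsWeightedHomogeneousMatrix (wt a₁ a₂ a₃ b c e) (Amat * Smat) c
      ![a₁, a₂, a₃] ![a₁, a₂, a₃] := by
  convert (isWeightedHomogeneousMatrix_Amat a₁ a₂ a₃ b c e).mul
    (isWeightedHomogeneousMatrix_Smat a₁ a₂ a₃ b c e) using 1
  ring

theorem isWeightedHomogeneousVector_Amat_mulVec_tVec :
    IsWeightedHomogeneousVector (wt a₁ a₂ a₃ b c e) (Amat *ᵥ tVec) (e - c) ![a₁, a₂, a₃] := by
  convert (isWeightedHomogeneousMatrix_Amat a₁ a₂ a₃ b c e).mulVec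
    (isWeightedHomogeneousVector_tVec a₁ a₂ a₃ b c e) using 1
  ring

theorem isWeightedHomogeneous_pVec_dotProduct_qVec :
    IsWeightedHomogeneous (wt a₁ a₂ a₃ b c e) (pVec ⬝ᵥ qVec) b := by
  simpa using (isWeightedHomogeneousVector_pVec a₁ a₂ a₃ b c e).dotProduct
    (isWeightedHomogeneousVector_qVec a₁ a₂ a₃ b c e)

theorem isWeightedHomogeneousVector_rIAS_p_add_p₄_At :
    IsWeightedHomogeneousVector (wt a₁ a₂ a₃ b c e)
      ((((X 7 : SSigma) • (1 : Matrix (Fin 3) (Fin 3) SSigma) + Amat * Smat) *ᵥ pVec) +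
        (X 3 : SSigma) • (Amat *ᵥ tVec)) c ![a₁, a₂, a₃] := by
  have hMp := ((isWeightedHomogeneousMatrix_smul_one (isWeightedHomogeneous_r a₁ a₂ a₃ b c e)
    _).add (isWeightedHomogeneousMatrix_Amat_mul_Smat a₁ a₂ a₃ b c e)).mulVec
    (isWeightedHomogeneousVector_pVec a₁ a₂ a₃ b c e)
  have hAt := IsWeightedHomogeneousVector.smul (isWeightedHomogeneous_p₄ a₁ a₂ a₃ b c e)
    (isWeightedHomogeneousVector_Amat_mulVec_tVec a₁ a₂ a₃ b c e)
  rw [add_zero] at hMp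
  exact hMp.add (by convert hAt using 1; ring)

theorem isWeightedHomogeneous_pSp_add_p₄_pt :
    IsWeightedHomogeneous (wt a₁ a₂ a₃ b c e)
      (pVec ⬝ᵥ (Smat *ᵥ pVec) + X 3 * (pVec ⬝ᵥ tVec)) (c + a₁ + a₂ + a₃ - b) := by
  have hp := isWeightedHomogeneousVector_pVec a₁ a₂ a₃ b c e
  have hpSp := hp.dotProduct ((isWeightedHomogeneousMatrix_Smat a₁ a₂ a₃ b c e).mulVec hp)
  have hpt := (isWeightedHomogeneous_p₄ a₁ a₂ a₃ b c e).mul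
    (hp.dotProduct (isWeightedHomogeneousVector_tVec a₁ a₂ a₃ b c e))
  refine IsWeightedHomogeneous.add ?_ ?_
  -- `rfl` closes the goal `convert` leaves between two defeq `AddCommMonoid ℤ` instances.
  · convert hpSp using 1 <;> first | rfl | ring
  · convert hpt using 1; ring

theorem isWeightedHomogeneousVector_Fvec :
    IsWeightedHomogeneousVector (wt a₁ a₂ a₃ b c e) Fvec e ![a₁, a₂, a₃] := by
  have hF := ((isWeightedHomogeneousMatrix_smul_one (isWeightedHomogeneous_r a₁ a₂ a₃ b c e)
    _).sub (isWeightedHomogeneousMatrix_Amat_mul_Smat a₁ a₂ a₃ b c e)).mulVec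
    (isWeightedHomogeneousVector_Amat_mulVec_tVec a₁ a₂ a₃ b c e)
  rwa [add_sub_cancel] at hF

theorem isWeightedHomogeneous_F4 : IsWeightedHomogeneous (wt a₁ a₂ a₃ b c e) F4 (2 * c) := by
  have hq := isWeightedHomogeneousVector_qVec a₁ a₂ a₃ b c e
  have hqSq := ((isWeightedHomogeneousMatrix_Smat a₁ a₂ a₃ b c e).adjugate.mulVec hq).dotProduct hq
  rw [F4, dotProduct_comm]
  refine (IsWeightedHomogeneous.add ?_ ?_).neg
  · simpa [two_mul] using (isWeightedHomogeneous_r a₁ a₂ a₃ b c e).pow 2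
  · convert hqSq using 1 <;> first | rfl | simp [Fin.sum_univ_three]; ring

theorem isWeightedHomogeneousVector_u_p_sub_Fvec :
    IsWeightedHomogeneousVector (wt a₁ a₂ a₃ b c e) ((X 8 : SSigma) • pVec - Fvec)
      e ![a₁, a₂, a₃] := by
  have hup := IsWeightedHomogeneousVector.smul (isWeightedHomogeneous_u a₁ a₂ a₃ b c e)
    (isWeightedHomogeneousVector_pVec a₁ a₂ a₃ b c e)
  rw [add_zero] at hup
  exact hup.sub (isWeightedHomogeneousVector_Fvec a₁ a₂ a₃ b c e)

theorem isWeightedHomogeneous_u_p₄_sub_F4 :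
    IsWeightedHomogeneous (wt a₁ a₂ a₃ b c e) (X 8 * X 3 - F4) (2 * c) := by
  have hup₄ := (isWeightedHomogeneous_u a₁ a₂ a₃ b c e).mul
    (isWeightedHomogeneous_p₄ a₁ a₂ a₃ b c e)
  rw [add_sub_cancel] at hup₄
  exact hup₄.sub (isWeightedHomogeneous_F4 a₁ a₂ a₃ b c e)

end SigmaGrading

/-- Each of the nine generators of `I_Σ` is weighted homogeneous for the above weights,
of respective degrees `d₀ = b`, `d₁ = c + a₁`, `d₂ = c + a₂`, `d₃ = c + a₃`,
`d₄ = c + a₁ + a₂ + a₃ − b`, `d₅ = e + a₁`, `d₆ = e + a₂`, `d₇ = e + a₃`, `d₈ = 2c`;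
moreover `d₀ + d₁ + ⋯ + d₈ = 3δ` where `δ = 2c + e + a₁ + a₂ + a₃`. -/
theorem sigma_generators_weighted_homogeneous (a₁ a₂ a₃ b c e : ℤ) :
    IsWeightedHomogeneous (wt a₁ a₂ a₃ b c e) (sigmaGens 0) b ∧
    IsWeightedHomogeneous (wt a₁ a₂ a₃ b c e) (sigmaGens 1) (c + a₁) ∧
    IsWeightedHomogeneous (wt a₁ a₂ a₃ b c e) (sigmaGens 2) (c + a₂) ∧
    IsWeightedHomogeneous (wt a₁ a₂ a₃ b c e) (sigmaGens 3) (c + a₃) ∧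
    IsWeightedHomogeneous (wt a₁ a₂ a₃ b c e) (sigmaGens 4) (c + a₁ + a₂ + a₃ - b) ∧
    IsWeightedHomogeneous (wt a₁ a₂ a₃ b c e) (sigmaGens 5) (e + a₁) ∧
    IsWeightedHomogeneous (wt a₁ a₂ a₃ b c e) (sigmaGens 6) (e + a₂) ∧
    IsWeightedHomogeneous (wt a₁ a₂ a₃ b c e) (sigmaGens 7) (e + a₃) ∧
    IsWeightedHomogeneous (wt a₁ a₂ a₃ b c e) (sigmaGens 8) (2 * c) ∧
    b + (c + a₁) + (c + a₂) + (c + a₃) + (c + a₁ + a₂ + a₃ - b) +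
        (e + a₁) + (e + a₂) + (e + a₃) + 2 * c =
      3 * (2 * c + e + a₁ + a₂ + a₃) := by
  have hlin := isWeightedHomogeneousVector_rIAS_p_add_p₄_At a₁ a₂ a₃ b c e
  have hup := isWeightedHomogeneousVector_u_p_sub_Fvec a₁ a₂ a₃ b c e
  exact ⟨isWeightedHomogeneous_pVec_dotProduct_qVec a₁ a₂ a₃ b c e, hlin 0, hlin 1, hlin 2,
    isWeightedHomogeneous_pSp_add_p₄_pt a₁ a₂ a₃ b c e, hup 0, hup 1, hup 2,
    isWeightedHomogeneous_u_p₄_sub_F4 a₁ a₂ a₃ b c e, by ring⟩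
end
end

section
/- For every 3×3 complex matrix g, the ℂ-algebra endomorphism φ_g of S_Σ determined on the variables by p ↦ g·p, q ↦ adj(gᵀ)·q, t ↦ adj(gᵀ)·t, S ↦ adj(gᵀ)·S·adj(g) (i.e., each sᵢⱼ is sent to the (i,j) entry of the symmetric matrix adj(gᵀ)·S·adj(g)), p₄ ↦ det(g)·p₄, r ↦ det(g)²·r, and u ↦ det(g)³·u, maps the ideal I_Σ into itself: φ_g(I_Σ) ⊆ I_Σ. In particular, GL₃(ℂ) acts on the affine variety Σ¹⁴_𝔸. -/
/-!
`S_Σ = ℂ[p₁,p₂,p₃,p₄,q₁,q₂,q₃,r,u,s₁₁,s₁₂,s₁₃,s₂₂,s₂₃,s₃₃,t₁,t₂,t₃]` is the polynomial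
ring in 18 variables, indexed by `Fin 18` in this order.  Writing `p`, `q`, `t` for the
corresponding column vectors, `S` for the symmetric matrix with entries `sᵢⱼ`, `A` for the
skew-symmetric matrix attached to `q`, `S†` for the adjugate of `S`,
`(F₁,F₂,F₃)ᵗ = (rI − AS)·A·t` and `F₄ = −(r² + qᵗ·S†·q)`, the ideal `I_Σ` is generated by
the nine polynomials `pᵗ·q`, the three entries of `(rI + AS)·p + p₄·A·t`,
`pᵗ·S·p + p₄·pᵗ·t`, the three entries of `u·p − (F₁,F₂,F₃)ᵗ`, and `u·p₄ − F₄`.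
`R_Σ = S_Σ/I_Σ`.
-/

open MvPolynomial Matrix

noncomputable section

/-- The transformed symmetric matrix `adj(gᵀ)·S·adj(g)` attached to a 3×3 complex
matrix `g`. -/
def glSmat (g : Matrix (Fin 3) (Fin 3) ℂ) : Matrix (Fin 3) (Fin 3) SSigma :=
  (g.transpose.adjugate.map C) * Smat * (g.adjugate.map C)

/-- The substitution on the 18 variables attached to a 3×3 complex matrix `g`:
`p ↦ g·p`, `q ↦ adj(gᵀ)·q`, `t ↦ adj(gᵀ)·t`, `S ↦ adj(gᵀ)·S·adj(g)`,
`p₄ ↦ det(g)·p₄`, `r ↦ det(g)²·r`, `u ↦ det(g)³·u`. -/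
def glSubst (g : Matrix (Fin 3) (Fin 3) ℂ) : Fin 18 → SSigma :=
  ![((g.map C) *ᵥ pVec) 0, ((g.map C) *ᵥ pVec) 1, ((g.map C) *ᵥ pVec) 2,
    C g.det * X 3,
    ((g.transpose.adjugate.map C) *ᵥ qVec) 0,
    ((g.transpose.adjugate.map C) *ᵥ qVec) 1,
    ((g.transpose.adjugate.map C) *ᵥ qVec) 2,
    C (g.det ^ 2) * X 7, C (g.det ^ 3) * X 8,
    glSmat g 0 0, glSmat g 0 1, glSmat g 0 2,
    glSmat g 1 1, glSmat g 1 2, glSmat g 2 2,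
    ((g.transpose.adjugate.map C) *ᵥ tVec) 0,
    ((g.transpose.adjugate.map C) *ᵥ tVec) 1,
    ((g.transpose.adjugate.map C) *ᵥ tVec) 2]

/-- The ℂ-algebra endomorphism `φ_g` of `S_Σ` determined by the above substitution. -/
def glHom (g : Matrix (Fin 3) (Fin 3) ℂ) : SSigma →ₐ[ℂ] SSigma :=
  aeval (glSubst g)


set_option maxHeartbeats 1000000
namespace SigmaAux
variable (g : Matrix (Fin 3) (Fin 3) ℂ)
def G : Matrix (Fin 3) (Fin 3) SSigma := g.map (C : ℂ → SSigma)
def H : Matrix (Fin 3) (Fin 3) SSigma := g.transpose.adjugate.map (C : ℂ → SSigma)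
def d : SSigma := C g.det

lemma phi_A : Amat.map (glHom g) = G g * Amat * (G g)ᵀ := by
  have a00 : Amat.map (glHom g) 0 0 = (G g * Amat * (G g)ᵀ) 0 0 := by
    rw [show Amat.map (glHom g) 0 0 = glHom g 0 from rfl, map_zero]
    simp [G, Amat, qVec, Matrix.mul_apply, Matrix.mulVec, dotProduct, Fin.sum_univ_three, Matrix.map_apply, Matrix.transpose_apply, Matrix.adjugate_fin_three, _root_.map_mul, map_sub, map_add, map_neg]
    ring
  have a01 : Amat.map (glHom g) 0 1 = (G g * Amat * (G g)ᵀ) 0 1 := by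
    rw [show Amat.map (glHom g) 0 1 = glHom g (-X 6) from rfl, map_neg,
      show glHom g (X 6) = glSubst g 6 from aeval_X _ _,
      show glSubst g 6 = ((g.transpose.adjugate.map (C : ℂ → SSigma)) *ᵥ qVec) 2 from rfl]
    simp [G, Amat, qVec, Matrix.mul_apply, Matrix.mulVec, dotProduct, Fin.sum_univ_three, Matrix.map_apply, Matrix.transpose_apply, Matrix.adjugate_fin_three, _root_.map_mul, map_sub, map_add, map_neg]
    ring
  have a02 : Amat.map (glHom g) 0 2 = (G g * Amat * (G g)ᵀ) 0 2 := by
    rw [show Amat.map (glHom g) 0 2 = glHom g (X 5) from rfl,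
      show glHom g (X 5) = glSubst g 5 from aeval_X _ _,
      show glSubst g 5 = ((g.transpose.adjugate.map (C : ℂ → SSigma)) *ᵥ qVec) 1 from rfl]
    simp [G, Amat, qVec, Matrix.mul_apply, Matrix.mulVec, dotProduct, Fin.sum_univ_three, Matrix.map_apply, Matrix.transpose_apply, Matrix.adjugate_fin_three, _root_.map_mul, map_sub, map_add, map_neg]
    ring
  have a10 : Amat.map (glHom g) 1 0 = (G g * Amat * (G g)ᵀ) 1 0 := by
    rw [show Amat.map (glHom g) 1 0 = glHom g (X 6) from rfl,
      show glHom g (X 6) = glSubst g 6 from aeval_X _ _,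
      show glSubst g 6 = ((g.transpose.adjugate.map (C : ℂ → SSigma)) *ᵥ qVec) 2 from rfl]
    simp [G, Amat, qVec, Matrix.mul_apply, Matrix.mulVec, dotProduct, Fin.sum_univ_three, Matrix.map_apply, Matrix.transpose_apply, Matrix.adjugate_fin_three, _root_.map_mul, map_sub, map_add, map_neg]
    ring
  have a11 : Amat.map (glHom g) 1 1 = (G g * Amat * (G g)ᵀ) 1 1 := by
    rw [show Amat.map (glHom g) 1 1 = glHom g 0 from rfl, map_zero]
    simp [G, Amat, qVec, Matrix.mul_apply, Matrix.mulVec, dotProduct, Fin.sum_univ_three, Matrix.map_apply, Matrix.transpose_apply, Matrix.adjugate_fin_three, _root_.map_mul, map_sub, map_add, map_neg]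
    ring
  have a12 : Amat.map (glHom g) 1 2 = (G g * Amat * (G g)ᵀ) 1 2 := by
    rw [show Amat.map (glHom g) 1 2 = glHom g (-X 4) from rfl, map_neg,
      show glHom g (X 4) = glSubst g 4 from aeval_X _ _,
      show glSubst g 4 = ((g.transpose.adjugate.map (C : ℂ → SSigma)) *ᵥ qVec) 0 from rfl]
    simp [G, Amat, qVec, Matrix.mul_apply, Matrix.mulVec, dotProduct, Fin.sum_univ_three, Matrix.map_apply, Matrix.transpose_apply, Matrix.adjugate_fin_three, _root_.map_mul, map_sub, map_add, map_neg]
    ring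
  have a20 : Amat.map (glHom g) 2 0 = (G g * Amat * (G g)ᵀ) 2 0 := by
    rw [show Amat.map (glHom g) 2 0 = glHom g (-X 5) from rfl, map_neg,
      show glHom g (X 5) = glSubst g 5 from aeval_X _ _,
      show glSubst g 5 = ((g.transpose.adjugate.map (C : ℂ → SSigma)) *ᵥ qVec) 1 from rfl]
    simp [G, Amat, qVec, Matrix.mul_apply, Matrix.mulVec, dotProduct, Fin.sum_univ_three, Matrix.map_apply, Matrix.transpose_apply, Matrix.adjugate_fin_three, _root_.map_mul, map_sub, map_add, map_neg]
    ring
  have a21 : Amat.map (glHom g) 2 1 = (G g * Amat * (G g)ᵀ) 2 1 := by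
    rw [show Amat.map (glHom g) 2 1 = glHom g (X 4) from rfl,
      show glHom g (X 4) = glSubst g 4 from aeval_X _ _,
      show glSubst g 4 = ((g.transpose.adjugate.map (C : ℂ → SSigma)) *ᵥ qVec) 0 from rfl]
    simp [G, Amat, qVec, Matrix.mul_apply, Matrix.mulVec, dotProduct, Fin.sum_univ_three, Matrix.map_apply, Matrix.transpose_apply, Matrix.adjugate_fin_three, _root_.map_mul, map_sub, map_add, map_neg]
    ring
  have a22 : Amat.map (glHom g) 2 2 = (G g * Amat * (G g)ᵀ) 2 2 := by
    rw [show Amat.map (glHom g) 2 2 = glHom g 0 from rfl, map_zero]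
    simp [G, Amat, qVec, Matrix.mul_apply, Matrix.mulVec, dotProduct, Fin.sum_univ_three, Matrix.map_apply, Matrix.transpose_apply, Matrix.adjugate_fin_three, _root_.map_mul, map_sub, map_add, map_neg]
    ring
  refine Matrix.ext fun i j => ?_
  fin_cases i <;> fin_cases j
  exacts [a00, a01, a02, a10, a11, a12, a20, a21, a22]


lemma phiX (n : Fin 18) : glHom g (X n) = glSubst g n := aeval_X _ n

lemma phi_p : (fun i => glHom g (pVec i)) = G g *ᵥ pVec := by
  have h0 : glHom g (pVec 0) = (G g *ᵥ pVec) 0 := by rw [show pVec 0 = (X 0 : SSigma) from rfl, phiX]; rfl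
  have h1 : glHom g (pVec 1) = (G g *ᵥ pVec) 1 := by rw [show pVec 1 = (X 1 : SSigma) from rfl, phiX]; rfl
  have h2 : glHom g (pVec 2) = (G g *ᵥ pVec) 2 := by rw [show pVec 2 = (X 2 : SSigma) from rfl, phiX]; rfl
  funext i; fin_cases i
  exacts [h0, h1, h2]

lemma phi_q : (fun i => glHom g (qVec i)) = H g *ᵥ qVec := by
  have h0 : glHom g (qVec 0) = (H g *ᵥ qVec) 0 := by rw [show qVec 0 = (X 4 : SSigma) from rfl, phiX]; rfl
  have h1 : glHom g (qVec 1) = (H g *ᵥ qVec) 1 := by rw [show qVec 1 = (X 5 : SSigma) from rfl, phiX]; rfl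
  have h2 : glHom g (qVec 2) = (H g *ᵥ qVec) 2 := by rw [show qVec 2 = (X 6 : SSigma) from rfl, phiX]; rfl
  funext i; fin_cases i
  exacts [h0, h1, h2]

lemma phi_t : (fun i => glHom g (tVec i)) = H g *ᵥ tVec := by
  have h0 : glHom g (tVec 0) = (H g *ᵥ tVec) 0 := by rw [show tVec 0 = (X 15 : SSigma) from rfl, phiX]; rfl
  have h1 : glHom g (tVec 1) = (H g *ᵥ tVec) 1 := by rw [show tVec 1 = (X 16 : SSigma) from rfl, phiX]; rfl
  have h2 : glHom g (tVec 2) = (H g *ᵥ tVec) 2 := by rw [show tVec 2 = (X 17 : SSigma) from rfl, phiX]; rfl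
  funext i; fin_cases i
  exacts [h0, h1, h2]

lemma Smat_symm : Smatᵀ = Smat := by
  refine Matrix.ext fun i j => ?_
  fin_cases i <;> fin_cases j <;> rfl

lemma glSmat_eq : glSmat g = H g * Smat * (H g)ᵀ := by
  have h2 : (H g)ᵀ = g.adjugate.map (C : ℂ → SSigma) := by
    rw [H, ← Matrix.transpose_map, Matrix.adjugate_transpose, Matrix.transpose_transpose]
  rw [glSmat, h2, H]

lemma glSmat_symm (i j : Fin 3) : glSmat g i j = glSmat g j i := by
  have h : (glSmat g)ᵀ = glSmat g := by
    rw [glSmat_eq, Matrix.transpose_mul, Matrix.transpose_mul, Matrix.transpose_transpose,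
      Smat_symm, Matrix.mul_assoc]
  conv_lhs => rw [← h]
  rfl

lemma phi_S : Smat.map (glHom g) = H g * Smat * (H g)ᵀ := by
  rw [← glSmat_eq]
  have h00 : Smat.map (glHom g) 0 0 = glSmat g 0 0 := by
    rw [show Smat.map (glHom g) 0 0 = glHom g (X 9) from rfl, phiX]; rfl
  have h01 : Smat.map (glHom g) 0 1 = glSmat g 0 1 := by
    rw [show Smat.map (glHom g) 0 1 = glHom g (X 10) from rfl, phiX]; rfl
  have h02 : Smat.map (glHom g) 0 2 = glSmat g 0 2 := by
    rw [show Smat.map (glHom g) 0 2 = glHom g (X 11) from rfl, phiX]; rfl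
  have h11 : Smat.map (glHom g) 1 1 = glSmat g 1 1 := by
    rw [show Smat.map (glHom g) 1 1 = glHom g (X 12) from rfl, phiX]; rfl
  have h12 : Smat.map (glHom g) 1 2 = glSmat g 1 2 := by
    rw [show Smat.map (glHom g) 1 2 = glHom g (X 13) from rfl, phiX]; rfl
  have h22 : Smat.map (glHom g) 2 2 = glSmat g 2 2 := by
    rw [show Smat.map (glHom g) 2 2 = glHom g (X 14) from rfl, phiX]; rfl
  have h10 : Smat.map (glHom g) 1 0 = glSmat g 1 0 := by
    rw [glSmat_symm g 1 0, show Smat.map (glHom g) 1 0 = glHom g (X 10) from rfl, phiX]; rfl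
  have h20 : Smat.map (glHom g) 2 0 = glSmat g 2 0 := by
    rw [glSmat_symm g 2 0, show Smat.map (glHom g) 2 0 = glHom g (X 11) from rfl, phiX]; rfl
  have h21 : Smat.map (glHom g) 2 1 = glSmat g 2 1 := by
    rw [glSmat_symm g 2 1, show Smat.map (glHom g) 2 1 = glHom g (X 13) from rfl, phiX]; rfl
  refine Matrix.ext fun i j => ?_
  fin_cases i <;> fin_cases j
  exacts [h00, h01, h02, h10, h11, h12, h20, h21, h22]

lemma H_eq : H g = (G g)ᵀ.adjugate := by
  have := (C : ℂ →+* SSigma).map_adjugate g.transpose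
  simpa [H, G, RingHom.mapMatrix_apply, Matrix.transpose_map] using this

lemma detG : (G g).det = d g := by
  have := (C : ℂ →+* SSigma).map_det g
  simp only [RingHom.mapMatrix_apply] at this
  rw [G, d, ← this]

lemma GtH : (G g)ᵀ * H g = d g • 1 := by
  rw [H_eq, Matrix.mul_adjugate, Matrix.det_transpose, detG]

lemma HGt : H g * (G g)ᵀ = d g • 1 := by
  rw [H_eq, Matrix.adjugate_mul, Matrix.det_transpose, detG]

lemma HtG : (H g)ᵀ * G g = d g • 1 := by
  have := congrArg Matrix.transpose (GtH g)
  simpa [Matrix.transpose_mul, Matrix.transpose_smul] using this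

lemma GHt : G g * (H g)ᵀ = d g • 1 := by
  have := congrArg Matrix.transpose (HGt g)
  simpa [Matrix.transpose_mul, Matrix.transpose_smul] using this

lemma adjH : (H g).adjugate = d g • (G g)ᵀ := by
  rw [H_eq, Matrix.adjugate_adjugate _ (by norm_num [Fintype.card_fin]), Matrix.det_transpose, detG]
  norm_num

-- vector-level helper facts
lemma GtHv (v : Fin 3 → SSigma) : (G g)ᵀ *ᵥ (H g *ᵥ v) = d g • v := by
  rw [Matrix.mulVec_mulVec, GtH, Matrix.smul_mulVec, Matrix.one_mulVec]

lemma HtGv (v : Fin 3 → SSigma) : (H g)ᵀ *ᵥ (G g *ᵥ v) = d g • v := by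
  rw [Matrix.mulVec_mulVec, HtG, Matrix.smul_mulVec, Matrix.one_mulVec]


lemma phi_mulVec (M : Matrix (Fin 3) (Fin 3) SSigma) (v : Fin 3 → SSigma) :
    (fun i => glHom g ((M *ᵥ v) i)) = (M.map (glHom g)) *ᵥ (fun j => glHom g (v j)) := by
  funext i
  simp [Matrix.mulVec, dotProduct, map_sum, _root_.map_mul, Matrix.map_apply]

lemma phi_dot (v w : Fin 3 → SSigma) :
    glHom g (v ⬝ᵥ w) = (fun i => glHom g (v i)) ⬝ᵥ (fun i => glHom g (w i)) := by
  simp [dotProduct, map_sum, _root_.map_mul]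

lemma phiX3 : glHom g (X 3) = d g * X 3 := by rw [phiX]; rfl

lemma phiX7 : glHom g (X 7) = d g ^ 2 * X 7 := by
  rw [phiX, show glSubst g 7 = C (g.det ^ 2) * X 7 from rfl, map_pow]; rfl

lemma phiX8 : glHom g (X 8) = d g ^ 3 * X 8 := by
  rw [phiX, show glSubst g 8 = C (g.det ^ 3) * X 8 from rfl, map_pow]; rfl

lemma mulVec_dot (M : Matrix (Fin 3) (Fin 3) SSigma) (v w : Fin 3 → SSigma) :
    (M *ᵥ v) ⬝ᵥ w = v ⬝ᵥ (Mᵀ *ᵥ w) := by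
  simp [dotProduct, Matrix.mulVec, Fin.sum_univ_three, Matrix.transpose_apply]
  ring

lemma key0 : glHom g (sigmaGens 0) = d g * sigmaGens 0 := by
  rw [show sigmaGens 0 = pVec ⬝ᵥ qVec from rfl, phi_dot, phi_p, phi_q]
  rw [mulVec_dot, GtHv, dotProduct_smul, smul_eq_mul]

lemma key4 : glHom g (sigmaGens 4) = d g ^ 2 * sigmaGens 4 := by
  rw [show sigmaGens 4 = pVec ⬝ᵥ (Smat *ᵥ pVec) + X 3 * (pVec ⬝ᵥ tVec) from rfl]
  rw [map_add, _root_.map_mul, phi_dot, phi_dot, phi_mulVec, phi_p, phi_t, phi_S, phiX3]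
  simp only [mulVec_dot, ← Matrix.mulVec_mulVec, GtHv, HtGv, Matrix.mulVec_smul,
    dotProduct_smul, smul_eq_mul]
  ring

lemma phi_matE_add (a : SSigma) (B D : Matrix (Fin 3) (Fin 3) SSigma) :
    ((a • (1 : Matrix (Fin 3) (Fin 3) SSigma) + B * D).map (glHom g))
      = glHom g a • (1 : Matrix (Fin 3) (Fin 3) SSigma) + B.map (glHom g) * D.map (glHom g) := by
  refine Matrix.ext fun i j => ?_
  simp [Matrix.map_apply, Matrix.add_apply, Matrix.mul_apply, Matrix.smul_apply,
    Matrix.one_apply, map_sum, _root_.map_mul, map_add, smul_eq_mul, apply_ite, mul_ite,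
    mul_one, mul_zero]

lemma phi_matE_sub (a : SSigma) (B D : Matrix (Fin 3) (Fin 3) SSigma) :
    ((a • (1 : Matrix (Fin 3) (Fin 3) SSigma) - B * D).map (glHom g))
      = glHom g a • (1 : Matrix (Fin 3) (Fin 3) SSigma) - B.map (glHom g) * D.map (glHom g) := by
  refine Matrix.ext fun i j => ?_
  simp [Matrix.map_apply, Matrix.sub_apply, Matrix.mul_apply, Matrix.smul_apply,
    Matrix.one_apply, map_sum, _root_.map_mul, map_sub, smul_eq_mul, apply_ite, mul_ite,
    mul_one, mul_zero]

def wVec : Fin 3 → SSigma :=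
  (((X 7 : SSigma) • (1 : Matrix (Fin 3) (Fin 3) SSigma) + Amat * Smat) *ᵥ pVec) +
      (X 3 : SSigma) • (Amat *ᵥ tVec)

def vVec : Fin 3 → SSigma := (X 8 : SSigma) • pVec - Fvec

lemma key13 : (fun i => glHom g (wVec i)) = d g ^ 2 • (G g *ᵥ wVec) := by
  have e1 : (fun i => glHom g (wVec i))
      = (((d g ^ 2 * X 7) • (1 : Matrix (Fin 3) (Fin 3) SSigma)
            + (G g * Amat * (G g)ᵀ) * (H g * Smat * (H g)ᵀ)) *ᵥ (G g *ᵥ pVec))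
        + (d g * X 3) • ((G g * Amat * (G g)ᵀ) *ᵥ (H g *ᵥ tVec)) := by
    funext i
    rw [show wVec i = (((X 7 : SSigma) • (1 : Matrix (Fin 3) (Fin 3) SSigma) + Amat * Smat) *ᵥ pVec) i
        + X 3 * (Amat *ᵥ tVec) i from rfl]
    rw [map_add, _root_.map_mul,
      congrFun (phi_mulVec g ((X 7 : SSigma) • (1 : Matrix (Fin 3) (Fin 3) SSigma) + Amat * Smat) pVec) i,
      congrFun (phi_mulVec g Amat tVec) i,
      phi_matE_add, phi_p, phi_t, phi_A, phi_S, phiX7, phiX3]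
    simp [Pi.add_apply, Pi.smul_apply, smul_eq_mul]
  rw [e1, wVec]
  simp only [Matrix.add_mulVec, Matrix.smul_mulVec, Matrix.one_mulVec,
    ← Matrix.mulVec_mulVec, GtHv, HtGv, Matrix.mulVec_smul, Matrix.mulVec_add,
    Matrix.smul_mulVec]
  funext i
  simp only [Pi.add_apply, Pi.smul_apply, smul_eq_mul]
  ring

lemma key57 : (fun i => glHom g (vVec i)) = d g ^ 3 • (G g *ᵥ vVec) := by
  have e1 : (fun i => glHom g (vVec i))
      = (d g ^ 3 * X 8) • (G g *ᵥ pVec)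
        - (((d g ^ 2 * X 7) • (1 : Matrix (Fin 3) (Fin 3) SSigma)
            - (G g * Amat * (G g)ᵀ) * (H g * Smat * (H g)ᵀ)) *ᵥ
              ((G g * Amat * (G g)ᵀ) *ᵥ (H g *ᵥ tVec))) := by
    funext i
    rw [show vVec i = X 8 * pVec i - Fvec i from rfl]
    rw [show Fvec i = (((X 7 : SSigma) • (1 : Matrix (Fin 3) (Fin 3) SSigma) - Amat * Smat) *ᵥ
        (Amat *ᵥ tVec)) i from rfl]
    rw [map_sub, _root_.map_mul,
      congrFun (phi_mulVec g ((X 7 : SSigma) • (1 : Matrix (Fin 3) (Fin 3) SSigma) - Amat * Smat) (Amat *ᵥ tVec)) i]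
    have e2 : (fun j => glHom g ((Amat *ᵥ tVec) j)) = (G g * Amat * (G g)ᵀ) *ᵥ (H g *ᵥ tVec) := by
      rw [phi_mulVec, phi_A, phi_t]
    rw [e2, phi_matE_sub, phi_A, phi_S, phiX7, phiX8]
    have e3 : glHom g (pVec i) = (G g *ᵥ pVec) i := congrFun (phi_p g) i
    rw [e3]
    simp [Pi.sub_apply, Pi.smul_apply, smul_eq_mul]
  rw [e1, vVec, Fvec]
  simp only [Matrix.sub_mulVec, Matrix.add_mulVec, Matrix.smul_mulVec, Matrix.one_mulVec,
    ← Matrix.mulVec_mulVec, GtHv, HtGv, Matrix.mulVec_smul, Matrix.mulVec_add, Matrix.mulVec_sub]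
  funext i
  simp only [Pi.add_apply, Pi.smul_apply, Pi.sub_apply, smul_eq_mul]
  ring

lemma key8 : glHom g (sigmaGens 8) = d g ^ 4 * sigmaGens 8 := by
  have hadj : Smat.adjugate.map (glHom g) = (H g * Smat * (H g)ᵀ).adjugate := by
    have h := (glHom g).map_adjugate Smat
    simp only [AlgHom.mapMatrix_apply] at h
    rw [h, phi_S]
  have hadj2 : (H g * Smat * (H g)ᵀ).adjugate = (d g ^ 2) • (G g * Smat.adjugate * (G g)ᵀ) := by
    rw [Matrix.adjugate_mul_distrib, Matrix.adjugate_mul_distrib, ← Matrix.adjugate_transpose,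
      adjH, Matrix.transpose_smul, Matrix.transpose_transpose]
    simp only [Matrix.smul_mul, Matrix.mul_smul, smul_smul, Matrix.mul_assoc]
    rw [pow_two]
  rw [show sigmaGens 8 = X 8 * X 3 - F4 from rfl,
    show F4 = -((X 7 : SSigma) ^ 2 + qVec ⬝ᵥ (Smat.adjugate *ᵥ qVec)) from rfl]
  rw [map_sub, _root_.map_mul, map_neg, map_add, map_pow, phiX8, phiX3, phiX7, phi_dot,
    phi_mulVec, phi_q, hadj, hadj2]
  simp only [← Matrix.mulVec_mulVec, Matrix.smul_mulVec, Matrix.mulVec_smul, GtHv, HtGv,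
    mulVec_dot, dotProduct_smul, smul_eq_mul]
  ring

lemma gens_mem (n : Fin 9) : sigmaGens n ∈ ISigma := Ideal.subset_span ⟨n, rfl⟩

lemma entry_mem (c : SSigma) (M : Matrix (Fin 3) (Fin 3) SSigma) (v : Fin 3 → SSigma)
    (hv : ∀ j, v j ∈ ISigma) (i : Fin 3) : (c • (M *ᵥ v)) i ∈ ISigma := by
  have e : (c • (M *ᵥ v)) i = c * (M i 0 * v 0 + M i 1 * v 1 + M i 2 * v 2) := by
    simp [Matrix.mulVec, dotProduct, Fin.sum_univ_three]
  rw [e]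
  exact Ideal.mul_mem_left _ _ (add_mem (add_mem (Ideal.mul_mem_left _ _ (hv 0))
    (Ideal.mul_mem_left _ _ (hv 1))) (Ideal.mul_mem_left _ _ (hv 2)))

lemma phi_gens_mem (n : Fin 9) : glHom g (sigmaGens n) ∈ ISigma := by
  have hw : ∀ j : Fin 3, wVec j ∈ ISigma := by
    intro j; fin_cases j
    exacts [gens_mem 1, gens_mem 2, gens_mem 3]
  have hv : ∀ j : Fin 3, vVec j ∈ ISigma := by
    intro j; fin_cases j
    exacts [gens_mem 5, gens_mem 6, gens_mem 7]
  have m0 : glHom g (sigmaGens 0) ∈ ISigma := by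
    rw [key0]; exact Ideal.mul_mem_left _ _ (gens_mem 0)
  have m4 : glHom g (sigmaGens 4) ∈ ISigma := by
    rw [key4]; exact Ideal.mul_mem_left _ _ (gens_mem 4)
  have m8 : glHom g (sigmaGens 8) ∈ ISigma := by
    rw [key8]; exact Ideal.mul_mem_left _ _ (gens_mem 8)
  have m1 : glHom g (sigmaGens 1) ∈ ISigma := by
    have h : glHom g (sigmaGens 1) = (d g ^ 2 • (G g *ᵥ wVec)) 0 := congrFun (key13 g) 0
    rw [h]; exact entry_mem _ _ _ hw 0
  have m2 : glHom g (sigmaGens 2) ∈ ISigma := by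
    have h : glHom g (sigmaGens 2) = (d g ^ 2 • (G g *ᵥ wVec)) 1 := congrFun (key13 g) 1
    rw [h]; exact entry_mem _ _ _ hw 1
  have m3 : glHom g (sigmaGens 3) ∈ ISigma := by
    have h : glHom g (sigmaGens 3) = (d g ^ 2 • (G g *ᵥ wVec)) 2 := congrFun (key13 g) 2
    rw [h]; exact entry_mem _ _ _ hw 2
  have m5 : glHom g (sigmaGens 5) ∈ ISigma := by
    have h : glHom g (sigmaGens 5) = (d g ^ 3 • (G g *ᵥ vVec)) 0 := congrFun (key57 g) 0
    rw [h]; exact entry_mem _ _ _ hv 0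
  have m6 : glHom g (sigmaGens 6) ∈ ISigma := by
    have h : glHom g (sigmaGens 6) = (d g ^ 3 • (G g *ᵥ vVec)) 1 := congrFun (key57 g) 1
    rw [h]; exact entry_mem _ _ _ hv 1
  have m7 : glHom g (sigmaGens 7) ∈ ISigma := by
    have h : glHom g (sigmaGens 7) = (d g ^ 3 • (G g *ᵥ vVec)) 2 := congrFun (key57 g) 2
    rw [h]; exact entry_mem _ _ _ hv 2
  fin_cases n
  exacts [m0, m1, m2, m3, m4, m5, m6, m7, m8]

end SigmaAux

/-- For every 3×3 complex matrix `g`, the ℂ-algebra endomorphism `φ_g` of `S_Σ` maps the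
ideal `I_Σ` into itself; in particular `GL₃(ℂ)` acts on the affine variety `Σ¹⁴_𝔸`. -/
theorem glHom_maps_ISigma_to_ISigma (g : Matrix (Fin 3) (Fin 3) ℂ) :
    ∀ x ∈ ISigma, glHom g x ∈ ISigma := by
  intro x hx
  refine Submodule.span_induction (p := fun y _ => glHom g y ∈ ISigma) ?_ ?_ ?_ ?_ hx
  · rintro y ⟨n, rfl⟩
    exact SigmaAux.phi_gens_mem g n
  · simp
  · intro a b _ _ hpa hpb
    rw [map_add]; exact add_mem hpa hpb
  · intro a b _ hpb
    rw [smul_eq_mul, _root_.map_mul]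
    exact Ideal.mul_mem_left _ _ hpb
end
end

section
/- For every 3×3 complex matrix g, the ℂ-algebra endomorphism φ_g of S_Σ (determined on the variables by p ↦ g·p, q ↦ adj(gᵀ)·q, t ↦ adj(gᵀ)·t, S ↦ adj(gᵀ)·S·adj(g), p₄ ↦ det(g)·p₄, r ↦ det(g)²·r, u ↦ det(g)³·u) transforms the polynomials F₁, F₂, F₃, F₄ as follows: (φ_g(F₁), φ_g(F₂), φ_g(F₃))ᵗ = det(g)³ · g · (F₁, F₂, F₃)ᵗ as vectors of polynomials, and φ_g(F₄) = det(g)⁴ · F₄. -/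
/-!
`S_Σ = ℂ[p₁,p₂,p₃,p₄,q₁,q₂,q₃,r,u,s₁₁,s₁₂,s₁₃,s₂₂,s₂₃,s₃₃,t₁,t₂,t₃]` is the polynomial
ring in 18 variables, indexed by `Fin 18` in this order.  Writing `p`, `q`, `t` for the
corresponding column vectors, `S` for the symmetric matrix with entries `sᵢⱼ`, `A` for the
skew-symmetric matrix attached to `q`, `S†` for the adjugate of `S`,
`(F₁,F₂,F₃)ᵗ = (rI − AS)·A·t` and `F₄ = −(r² + qᵗ·S†·q)`, the ideal `I_Σ` is generated by
the nine polynomials `pᵗ·q`, the three entries of `(rI + AS)·p + p₄·A·t`,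
`pᵗ·S·p + p₄·pᵗ·t`, the three entries of `u·p − (F₁,F₂,F₃)ᵗ`, and `u·p₄ − F₄`.
`R_Σ = S_Σ/I_Σ`.
-/

open MvPolynomial Matrix

noncomputable section

/-- The cross-product matrix of a 3-vector. -/
def crossMat {R : Type*} [CommRing R] (v : Fin 3 → R) : Matrix (Fin 3) (Fin 3) R :=
  !![0, -v 2, v 1; v 2, 0, -v 0; -v 1, v 0, 0]

lemma crossKey {R : Type*} [CommRing R] (M : Matrix (Fin 3) (Fin 3) R) (v w : Fin 3 → R) :
    crossMat (M *ᵥ v) *ᵥ (M *ᵥ w) = M.adjugateᵀ *ᵥ (crossMat v *ᵥ w) := by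
  funext i
  fin_cases i <;>
  · simp [crossMat, Matrix.mulVec, dotProduct, Fin.sum_univ_three,
      Matrix.adjugate_fin_three, Matrix.transpose_apply]
    ring

lemma Amat_eq : Amat = crossMat qVec := by
  ext i j
  fin_cases i <;> fin_cases j <;> rfl

lemma Smat_symm : Smatᵀ = Smat := by
  ext i j
  fin_cases i <;> fin_cases j <;> rfl

lemma ringHom_mulVec {R S : Type*} [CommSemiring R] [CommSemiring S] (f : R →+* S)
    (M : Matrix (Fin 3) (Fin 3) R) (v : Fin 3 → R) :
    (fun i => f ((M *ᵥ v) i)) = (M.map f) *ᵥ fun i => f (v i) := by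
  funext i
  simp [Matrix.mulVec, dotProduct, Matrix.map_apply]

lemma ringHom_dotProduct {R S : Type*} [CommSemiring R] [CommSemiring S] (f : R →+* S)
    (v w : Fin 3 → R) :
    f (v ⬝ᵥ w) = (fun i => f (v i)) ⬝ᵥ (fun i => f (w i)) := by
  simp [dotProduct]

lemma map_C_smul (r : ℂ) (M : Matrix (Fin 3) (Fin 3) ℂ) :
    (r • M).map (C : ℂ →+* SSigma) = (C r : SSigma) • M.map C := by
  ext i j
  simp [Matrix.map_apply]

example : True := trivial

set_option maxHeartbeats 1600000 in
/-- For every 3×3 complex matrix `g`, the endomorphism `φ_g` transforms the polynomials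
`F₁, F₂, F₃, F₄` by `(φ_g(F₁), φ_g(F₂), φ_g(F₃))ᵗ = det(g)³ · g · (F₁,F₂,F₃)ᵗ` and
`φ_g(F₄) = det(g)⁴ · F₄`. -/
theorem glHom_transforms_F (g : Matrix (Fin 3) (Fin 3) ℂ) :
    (∀ i : Fin 3, glHom g (Fvec i) = C (g.det ^ 3) * ((g.map C) *ᵥ Fvec) i) ∧
      glHom g F4 = C (g.det ^ 4) * F4 := by
  set φ : SSigma →+* SSigma := (glHom g).toRingHom with hφdef
  set B : Matrix (Fin 3) (Fin 3) SSigma := g.transpose.adjugate.map C with hB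
  set G : Matrix (Fin 3) (Fin 3) SSigma := g.map C with hG
  set d : SSigma := C g.det with hd
  have e : ∀ n : Fin 18, φ (X n) = glSubst g n := fun n => by
    rw [hφdef]; show glHom g _ = _; rw [glHom, aeval_X]
  -- transpose facts
  have hBT : Bᵀ = g.adjugate.map C := by
    rw [hB, ← Matrix.transpose_map, ← Matrix.adjugate_transpose, Matrix.transpose_transpose]
  have hGT : (gᵀ).map (C : ℂ → SSigma) = Gᵀ := by rw [hG, Matrix.transpose_map]
  -- variable images
  have h_t : (fun i => φ (tVec i)) = B *ᵥ tVec := by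
    funext i; fin_cases i
    · exact e 15
    · exact e 16
    · exact e 17
  have h_q : (fun i => φ (qVec i)) = B *ᵥ qVec := by
    funext i; fin_cases i
    · exact e 4
    · exact e 5
    · exact e 6
  have h_r : φ (X 7) = d ^ 2 * X 7 := by
    rw [hd, ← map_pow]; exact e 7
  have h_A : Amat.map ⇑φ = crossMat (B *ᵥ qVec) := by
    refine Matrix.ext fun i j => ?_
    fin_cases i <;> fin_cases j
    · exact map_zero φ
    · exact (map_neg φ (X 6)).trans (congrArg Neg.neg (e 6))
    · exact e 5
    · exact e 6
    · exact map_zero φ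
    · exact (map_neg φ (X 4)).trans (congrArg Neg.neg (e 4))
    · exact (map_neg φ (X 5)).trans (congrArg Neg.neg (e 5))
    · exact e 4
    · exact map_zero φ
  have hglS : glSmat g = B * Smat * Bᵀ := by rw [glSmat, hBT, hB]
  have hsym : ∀ i j, glSmat g i j = glSmat g j i := by
    intro i j
    have h : (glSmat g)ᵀ = glSmat g := by
      rw [hglS, Matrix.transpose_mul, Matrix.transpose_mul, Matrix.transpose_transpose,
        Smat_symm, Matrix.mul_assoc]
    conv_lhs => rw [← h]
    rfl
  have h_S : Smat.map ⇑φ = B * Smat * Bᵀ := by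
    rw [← hglS]
    refine Matrix.ext fun i j => ?_
    fin_cases i <;> fin_cases j
    · exact e 9
    · exact e 10
    · exact e 11
    · exact (e 10).trans (hsym 0 1)
    · exact e 12
    · exact e 13
    · exact (e 11).trans (hsym 0 2)
    · exact (e 13).trans (hsym 1 2)
    · exact e 14
  -- adjugate facts
  have hmap1 : (1 : Matrix (Fin 3) (Fin 3) ℂ).map (C : ℂ → SSigma) = 1 :=
    Matrix.map_one _ (map_zero C) (map_one C)
  have fBTG : Bᵀ * G = d • 1 := by
    rw [hBT, hG, ← Matrix.map_mul, Matrix.adjugate_mul, map_C_smul, hmap1]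
  have fGTB : Gᵀ * B = d • 1 := by
    rw [hB, hG, ← Matrix.transpose_map, ← Matrix.map_mul, Matrix.mul_adjugate,
      Matrix.det_transpose, map_C_smul, hmap1]
  have fadjB : B.adjugate = d • (gᵀ).map (C : ℂ → SSigma) := by
    have h1 : (gᵀ.adjugate.map (C : ℂ → SSigma)).adjugate
        = (gᵀ.adjugate.adjugate).map (C : ℂ → SSigma) := by
      have h2 := (C : ℂ →+* SSigma).map_adjugate gᵀ.adjugate
      simpa [RingHom.mapMatrix_apply] using h2.symm
    rw [hB, h1, Matrix.adjugate_adjugate _ (by simp), Fintype.card_fin]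
    norm_num
    rw [map_C_smul, hd]
  have fadjBT : B.adjugateᵀ = d • G := by
    rw [fadjB, Matrix.transpose_smul, hGT, Matrix.transpose_transpose]
  -- the F-vector transformation
  have hF : Fvec = (X 7 : SSigma) • (Amat *ᵥ tVec) - Amat *ᵥ (Smat *ᵥ (Amat *ᵥ tVec)) := by
    rw [Fvec, Matrix.sub_mulVec, Matrix.smul_mulVec, Matrix.one_mulVec,
      ← Matrix.mulVec_mulVec]
  have hw' : (fun i => φ ((Amat *ᵥ tVec) i)) = d • (G *ᵥ (Amat *ᵥ tVec)) := by
    rw [ringHom_mulVec, h_t, h_A, Amat_eq, crossKey, fadjBT, Matrix.smul_mulVec,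
      ← Amat_eq]
  have step1 : (B * Smat * Bᵀ) *ᵥ (d • (G *ᵥ (Amat *ᵥ tVec)))
      = (d * d) • (B *ᵥ (Smat *ᵥ (Amat *ᵥ tVec))) := by
    rw [Matrix.mulVec_smul, Matrix.mulVec_mulVec, Matrix.mul_assoc (B * Smat) Bᵀ G, fBTG,
      Matrix.mul_smul, mul_one, Matrix.smul_mulVec, smul_smul, ← Matrix.mulVec_mulVec]
  have step2 : crossMat (B *ᵥ qVec) *ᵥ ((d * d) • (B *ᵥ (Smat *ᵥ (Amat *ᵥ tVec))))
      = (d * d * d) • (G *ᵥ (Amat *ᵥ (Smat *ᵥ (Amat *ᵥ tVec)))) := by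
    rw [Matrix.mulVec_smul, crossKey, ← Amat_eq, fadjBT, Matrix.smul_mulVec, smul_smul]
  have hASw : (fun i => φ ((Amat *ᵥ (Smat *ᵥ (Amat *ᵥ tVec))) i))
      = (d * d * d) • (G *ᵥ (Amat *ᵥ (Smat *ᵥ (Amat *ᵥ tVec)))) := by
    rw [ringHom_mulVec, ringHom_mulVec, hw', h_A, h_S, step1, step2]
  have key : (fun i => φ (Fvec i)) = (d * d * d) • (G *ᵥ Fvec) := by
    have expand : (fun i => φ (Fvec i))
        = φ (X 7) • (fun i => φ ((Amat *ᵥ tVec) i))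
          - (fun i => φ ((Amat *ᵥ (Smat *ᵥ (Amat *ᵥ tVec))) i)) := by
      funext i
      rw [hF]
      simp [smul_eq_mul]
    rw [expand, hw', hASw, h_r, hF]
    funext i
    simp only [Matrix.mulVec_sub, Matrix.mulVec_smul, Pi.smul_apply, Pi.sub_apply,
      smul_eq_mul]
    ring
  constructor
  · intro i
    have hk := congrFun key i
    have : glHom g (Fvec i) = φ (Fvec i) := rfl
    rw [this, hk, hG]
    simp only [Pi.smul_apply, smul_eq_mul, hd, map_pow]
    ring
  · -- F4
    have hadj : Smat.adjugate.map ⇑φ = (B * Smat * Bᵀ).adjugate := by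
      have h2 := φ.map_adjugate Smat
      simp only [RingHom.mapMatrix_apply] at h2
      rw [h2, h_S]
    have hBSB : (B * Smat * Bᵀ).adjugate = (d * d) • (G * Smat.adjugate * Gᵀ) := by
      rw [Matrix.adjugate_mul_distrib, Matrix.adjugate_mul_distrib, ← Matrix.adjugate_transpose,
        fadjBT, fadjB, hGT, Matrix.smul_mul, Matrix.mul_smul, Matrix.mul_smul, smul_smul,
        Matrix.mul_assoc]
    have hv : (fun i => φ ((Smat.adjugate *ᵥ qVec) i))
        = (d * d * d) • (G *ᵥ (Smat.adjugate *ᵥ qVec)) := by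
      rw [ringHom_mulVec, h_q, hadj, hBSB, Matrix.smul_mulVec, Matrix.mulVec_mulVec,
        Matrix.mul_assoc (G * Smat.adjugate) Gᵀ B, fGTB, Matrix.mul_smul, mul_one,
        Matrix.smul_mulVec, smul_smul, ← Matrix.mulVec_mulVec]
    have hdot : φ (qVec ⬝ᵥ (Smat.adjugate *ᵥ qVec))
        = (d * d * d * d) * (qVec ⬝ᵥ (Smat.adjugate *ᵥ qVec)) := by
      rw [ringHom_dotProduct, h_q, hv, dotProduct_smul, Matrix.dotProduct_mulVec,
        ← Matrix.mulVec_transpose, Matrix.mulVec_mulVec, fGTB, Matrix.smul_mulVec,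
        Matrix.one_mulVec, smul_dotProduct]
      simp only [smul_eq_mul]
      ring
    have hF4 : glHom g F4 = φ F4 := rfl
    rw [hF4, F4, map_neg, map_add, map_pow, h_r, hdot, hd]
    simp only [map_pow]
    ring
end
end

section
/- Consider the nine defining polynomials of Σ¹⁴_𝔸 specialized at S = 0 and t = 0 (all sᵢⱼ = 0 and all tᵢ = 0). A point (p₁,p₂,p₃,p₄,q₁,q₂,q₃,r,u) ∈ ℂ⁹ is a common zero of these specialized polynomials if and only if either (r = 0, u = 0, and p₁q₁ + p₂q₂ + p₃q₃ = 0) or (p₁ = p₂ = p₃ = 0 and r² + p₄u = 0). (This identifies the fiber of the ℙ²×ℙ²-fibration over the origin of 𝔸(S,t) as the union of a 5-dimensional quadric and a 4-dimensional quadric.) -/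
/-!
`S_Σ = ℂ[p₁,p₂,p₃,p₄,q₁,q₂,q₃,r,u,s₁₁,s₁₂,s₁₃,s₂₂,s₂₃,s₃₃,t₁,t₂,t₃]` is the polynomial
ring in 18 variables, indexed by `Fin 18` in this order.  Writing `p`, `q`, `t` for the
corresponding column vectors, `S` for the symmetric matrix with entries `sᵢⱼ`, `A` for the
skew-symmetric matrix attached to `q`, `S†` for the adjugate of `S`,
`(F₁,F₂,F₃)ᵗ = (rI − AS)·A·t` and `F₄ = −(r² + qᵗ·S†·q)`, the ideal `I_Σ` is generated by
the nine polynomials `pᵗ·q`, the three entries of `(rI + AS)·p + p₄·A·t`,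
`pᵗ·S·p + p₄·pᵗ·t`, the three entries of `u·p − (F₁,F₂,F₃)ᵗ`, and `u·p₄ − F₄`.
`R_Σ = S_Σ/I_Σ`.
-/

open MvPolynomial Matrix

noncomputable section

set_option maxHeartbeats 4000000

/-- A point `(p₁,p₂,p₃,p₄,q₁,q₂,q₃,r,u) ∈ ℂ⁹` is a common zero of the nine defining
polynomials of `Σ¹⁴_𝔸` specialized at `S = 0` and `t = 0` if and only if either
`r = 0`, `u = 0` and `p₁q₁ + p₂q₂ + p₃q₃ = 0`, or `p₁ = p₂ = p₃ = 0` and `r² + p₄u = 0`.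
(This identifies the fiber of the `ℙ²×ℙ²`-fibration over the origin of `𝔸(S,t)` as the
union of a 5-dimensional quadric and a 4-dimensional quadric.) -/
theorem fiber_over_origin (p₁ p₂ p₃ p₄ q₁ q₂ q₃ r u : ℂ) :
    (∀ i : Fin 9,
        eval ![p₁, p₂, p₃, p₄, q₁, q₂, q₃, r, u, 0, 0, 0, 0, 0, 0, 0, 0, 0]
          (sigmaGens i) = 0) ↔
      ((r = 0 ∧ u = 0 ∧ p₁ * q₁ + p₂ * q₂ + p₃ * q₃ = 0) ∨
        (p₁ = 0 ∧ p₂ = 0 ∧ p₃ = 0 ∧ r ^ 2 + p₄ * u = 0)) := by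
  have e0 : (![p₁, p₂, p₃, p₄, q₁, q₂, q₃, r, u, 0, 0, 0, 0, 0, 0, 0, 0, 0] : Fin 18 → ℂ) 0 = p₁ := rfl
  have e1 : (![p₁, p₂, p₃, p₄, q₁, q₂, q₃, r, u, 0, 0, 0, 0, 0, 0, 0, 0, 0] : Fin 18 → ℂ) 1 = p₂ := rfl
  have e2 : (![p₁, p₂, p₃, p₄, q₁, q₂, q₃, r, u, 0, 0, 0, 0, 0, 0, 0, 0, 0] : Fin 18 → ℂ) 2 = p₃ := rfl
  have e3 : (![p₁, p₂, p₃, p₄, q₁, q₂, q₃, r, u, 0, 0, 0, 0, 0, 0, 0, 0, 0] : Fin 18 → ℂ) 3 = p₄ := rfl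
  have e4 : (![p₁, p₂, p₃, p₄, q₁, q₂, q₃, r, u, 0, 0, 0, 0, 0, 0, 0, 0, 0] : Fin 18 → ℂ) 4 = q₁ := rfl
  have e5 : (![p₁, p₂, p₃, p₄, q₁, q₂, q₃, r, u, 0, 0, 0, 0, 0, 0, 0, 0, 0] : Fin 18 → ℂ) 5 = q₂ := rfl
  have e6 : (![p₁, p₂, p₃, p₄, q₁, q₂, q₃, r, u, 0, 0, 0, 0, 0, 0, 0, 0, 0] : Fin 18 → ℂ) 6 = q₃ := rfl
  have e7 : (![p₁, p₂, p₃, p₄, q₁, q₂, q₃, r, u, 0, 0, 0, 0, 0, 0, 0, 0, 0] : Fin 18 → ℂ) 7 = r := rfl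
  have e8 : (![p₁, p₂, p₃, p₄, q₁, q₂, q₃, r, u, 0, 0, 0, 0, 0, 0, 0, 0, 0] : Fin 18 → ℂ) 8 = u := rfl
  have e9 : (![p₁, p₂, p₃, p₄, q₁, q₂, q₃, r, u, 0, 0, 0, 0, 0, 0, 0, 0, 0] : Fin 18 → ℂ) 9 = (0:ℂ) := rfl
  have e10 : (![p₁, p₂, p₃, p₄, q₁, q₂, q₃, r, u, 0, 0, 0, 0, 0, 0, 0, 0, 0] : Fin 18 → ℂ) 10 = (0:ℂ) := rfl
  have e11 : (![p₁, p₂, p₃, p₄, q₁, q₂, q₃, r, u, 0, 0, 0, 0, 0, 0, 0, 0, 0] : Fin 18 → ℂ) 11 = (0:ℂ) := rfl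
  have e12 : (![p₁, p₂, p₃, p₄, q₁, q₂, q₃, r, u, 0, 0, 0, 0, 0, 0, 0, 0, 0] : Fin 18 → ℂ) 12 = (0:ℂ) := rfl
  have e13 : (![p₁, p₂, p₃, p₄, q₁, q₂, q₃, r, u, 0, 0, 0, 0, 0, 0, 0, 0, 0] : Fin 18 → ℂ) 13 = (0:ℂ) := rfl
  have e14 : (![p₁, p₂, p₃, p₄, q₁, q₂, q₃, r, u, 0, 0, 0, 0, 0, 0, 0, 0, 0] : Fin 18 → ℂ) 14 = (0:ℂ) := rfl
  have e15 : (![p₁, p₂, p₃, p₄, q₁, q₂, q₃, r, u, 0, 0, 0, 0, 0, 0, 0, 0, 0] : Fin 18 → ℂ) 15 = (0:ℂ) := rfl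
  have e16 : (![p₁, p₂, p₃, p₄, q₁, q₂, q₃, r, u, 0, 0, 0, 0, 0, 0, 0, 0, 0] : Fin 18 → ℂ) 16 = (0:ℂ) := rfl
  have e17 : (![p₁, p₂, p₃, p₄, q₁, q₂, q₃, r, u, 0, 0, 0, 0, 0, 0, 0, 0, 0] : Fin 18 → ℂ) 17 = (0:ℂ) := rfl
  have h0 : eval ![p₁, p₂, p₃, p₄, q₁, q₂, q₃, r, u, 0, 0, 0, 0, 0, 0, 0, 0, 0]
      (sigmaGens 0) = p₁*q₁+p₂*q₂+p₃*q₃ := by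
    rw [show (0:Fin 9) = (0:Fin 9) from rfl]
    simp only [sigmaGens, Matrix.cons_val_succ, Matrix.cons_val_zero]
    simp [pVec, qVec, tVec, Smat, Amat, Fvec, F4, Matrix.mulVec,
      dotProduct, Matrix.adjugate_fin_three, Fin.sum_univ_succ,
      Matrix.mul_apply, Matrix.one_apply,
      e0, e1, e2, e3, e4, e5, e6, e7, e8, e9, e10, e11, e12, e13, e14, e15, e16, e17]
    all_goals ring
  have h1 : eval ![p₁, p₂, p₃, p₄, q₁, q₂, q₃, r, u, 0, 0, 0, 0, 0, 0, 0, 0, 0]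
      (sigmaGens 1) = r*p₁ := by
    rw [show (1:Fin 9) = (0:Fin 8).succ from rfl]
    simp only [sigmaGens, Matrix.cons_val_succ, Matrix.cons_val_zero]
    simp [pVec, qVec, tVec, Smat, Amat, Fvec, F4, Matrix.mulVec,
      dotProduct, Matrix.adjugate_fin_three, Fin.sum_univ_succ,
      Matrix.mul_apply, Matrix.one_apply,
      e0, e1, e2, e3, e4, e5, e6, e7, e8, e9, e10, e11, e12, e13, e14, e15, e16, e17]
    all_goals ring
  have h2 : eval ![p₁, p₂, p₃, p₄, q₁, q₂, q₃, r, u, 0, 0, 0, 0, 0, 0, 0, 0, 0]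
      (sigmaGens 2) = r*p₂ := by
    rw [show (2:Fin 9) = (0:Fin 7).succ.succ from rfl]
    simp only [sigmaGens, Matrix.cons_val_succ, Matrix.cons_val_zero]
    simp [pVec, qVec, tVec, Smat, Amat, Fvec, F4, Matrix.mulVec,
      dotProduct, Matrix.adjugate_fin_three, Fin.sum_univ_succ,
      Matrix.mul_apply, Matrix.one_apply,
      e0, e1, e2, e3, e4, e5, e6, e7, e8, e9, e10, e11, e12, e13, e14, e15, e16, e17]
    all_goals ring
  have h3 : eval ![p₁, p₂, p₃, p₄, q₁, q₂, q₃, r, u, 0, 0, 0, 0, 0, 0, 0, 0, 0]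
      (sigmaGens 3) = r*p₃ := by
    rw [show (3:Fin 9) = (0:Fin 6).succ.succ.succ from rfl]
    simp only [sigmaGens, Matrix.cons_val_succ, Matrix.cons_val_zero]
    simp [pVec, qVec, tVec, Smat, Amat, Fvec, F4, Matrix.mulVec,
      dotProduct, Matrix.adjugate_fin_three, Fin.sum_univ_succ,
      Matrix.mul_apply, Matrix.one_apply,
      e0, e1, e2, e3, e4, e5, e6, e7, e8, e9, e10, e11, e12, e13, e14, e15, e16, e17]
    all_goals ring
  have h4 : eval ![p₁, p₂, p₃, p₄, q₁, q₂, q₃, r, u, 0, 0, 0, 0, 0, 0, 0, 0, 0]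
      (sigmaGens 4) = (0:ℂ) := by
    rw [show (4:Fin 9) = (0:Fin 5).succ.succ.succ.succ from rfl]
    simp only [sigmaGens, Matrix.cons_val_succ, Matrix.cons_val_zero]
    simp [pVec, qVec, tVec, Smat, Amat, Fvec, F4, Matrix.mulVec,
      dotProduct, Matrix.adjugate_fin_three, Fin.sum_univ_succ,
      Matrix.mul_apply, Matrix.one_apply,
      e0, e1, e2, e3, e4, e5, e6, e7, e8, e9, e10, e11, e12, e13, e14, e15, e16, e17]
    all_goals ring
  have h5 : eval ![p₁, p₂, p₃, p₄, q₁, q₂, q₃, r, u, 0, 0, 0, 0, 0, 0, 0, 0, 0]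
      (sigmaGens 5) = u*p₁ := by
    rw [show (5:Fin 9) = (0:Fin 4).succ.succ.succ.succ.succ from rfl]
    simp only [sigmaGens, Matrix.cons_val_succ, Matrix.cons_val_zero]
    simp [pVec, qVec, tVec, Smat, Amat, Fvec, F4, Matrix.mulVec,
      dotProduct, Matrix.adjugate_fin_three, Fin.sum_univ_succ,
      Matrix.mul_apply, Matrix.one_apply,
      e0, e1, e2, e3, e4, e5, e6, e7, e8, e9, e10, e11, e12, e13, e14, e15, e16, e17]
    all_goals ring
  have h6 : eval ![p₁, p₂, p₃, p₄, q₁, q₂, q₃, r, u, 0, 0, 0, 0, 0, 0, 0, 0, 0]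
      (sigmaGens 6) = u*p₂ := by
    rw [show (6:Fin 9) = (0:Fin 3).succ.succ.succ.succ.succ.succ from rfl]
    simp only [sigmaGens, Matrix.cons_val_succ, Matrix.cons_val_zero]
    simp [pVec, qVec, tVec, Smat, Amat, Fvec, F4, Matrix.mulVec,
      dotProduct, Matrix.adjugate_fin_three, Fin.sum_univ_succ,
      Matrix.mul_apply, Matrix.one_apply,
      e0, e1, e2, e3, e4, e5, e6, e7, e8, e9, e10, e11, e12, e13, e14, e15, e16, e17]
    all_goals ring
  have h7 : eval ![p₁, p₂, p₃, p₄, q₁, q₂, q₃, r, u, 0, 0, 0, 0, 0, 0, 0, 0, 0]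
      (sigmaGens 7) = u*p₃ := by
    rw [show (7:Fin 9) = (0:Fin 2).succ.succ.succ.succ.succ.succ.succ from rfl]
    simp only [sigmaGens, Matrix.cons_val_succ, Matrix.cons_val_zero]
    simp [pVec, qVec, tVec, Smat, Amat, Fvec, F4, Matrix.mulVec,
      dotProduct, Matrix.adjugate_fin_three, Fin.sum_univ_succ,
      Matrix.mul_apply, Matrix.one_apply,
      e0, e1, e2, e3, e4, e5, e6, e7, e8, e9, e10, e11, e12, e13, e14, e15, e16, e17]
    all_goals ring
  have h8 : eval ![p₁, p₂, p₃, p₄, q₁, q₂, q₃, r, u, 0, 0, 0, 0, 0, 0, 0, 0, 0]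
      (sigmaGens 8) = u*p₄+r^2 := by
    rw [show (8:Fin 9) = (0:Fin 1).succ.succ.succ.succ.succ.succ.succ.succ from rfl]
    simp only [sigmaGens, Matrix.cons_val_succ, Matrix.cons_val_zero]
    simp [pVec, qVec, tVec, Smat, Amat, Fvec, F4, Matrix.mulVec,
      dotProduct, Matrix.adjugate_fin_three, Fin.sum_univ_succ,
      Matrix.mul_apply, Matrix.one_apply,
      e0, e1, e2, e3, e4, e5, e6, e7, e8, e9, e10, e11, e12, e13, e14, e15, e16, e17]
    all_goals ring
  constructor
  · intro hall
    have H0 := h0 ▸ hall 0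
    have H1 := h1 ▸ hall 1
    have H2 := h2 ▸ hall 2
    have H3 := h3 ▸ hall 3
    have H5 := h5 ▸ hall 5
    have H6 := h6 ▸ hall 6
    have H7 := h7 ▸ hall 7
    have H8 := h8 ▸ hall 8
    by_cases hp : p₁ = 0 ∧ p₂ = 0 ∧ p₃ = 0
    · exact Or.inr ⟨hp.1, hp.2.1, hp.2.2, by linear_combination H8⟩
    · left
      have hr : r = 0 := by
        rcases not_and_or.mp hp with hh | hh
        · exact (mul_eq_zero.mp H1).resolve_right hh
        rcases not_and_or.mp hh with hh | hh
        · exact (mul_eq_zero.mp H2).resolve_right hh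
        · exact (mul_eq_zero.mp H3).resolve_right hh
      have hu : u = 0 := by
        rcases not_and_or.mp hp with hh | hh
        · exact (mul_eq_zero.mp H5).resolve_right hh
        rcases not_and_or.mp hh with hh | hh
        · exact (mul_eq_zero.mp H6).resolve_right hh
        · exact (mul_eq_zero.mp H7).resolve_right hh
      exact ⟨hr, hu, H0⟩
  · rintro (⟨hr, hu, hpq⟩ | ⟨hp1, hp2, hp3, hq⟩) <;> intro i <;> fin_cases i
    · exact h0.trans hpq
    · exact h1.trans (by rw [hr]; ring)
    · exact h2.trans (by rw [hr]; ring)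
    · exact h3.trans (by rw [hr]; ring)
    · exact h4
    · exact h5.trans (by rw [hu]; ring)
    · exact h6.trans (by rw [hu]; ring)
    · exact h7.trans (by rw [hu]; ring)
    · exact h8.trans (by rw [hr, hu]; ring)
    · exact h0.trans (by rw [hp1, hp2, hp3]; ring)
    · exact h1.trans (by rw [hp1]; ring)
    · exact h2.trans (by rw [hp2]; ring)
    · exact h3.trans (by rw [hp3]; ring)
    · exact h4
    · exact h5.trans (by rw [hp1]; ring)
    · exact h6.trans (by rw [hp2]; ring)
    · exact h7.trans (by rw [hp3]; ring)
    · exact h8.trans (by linear_combination hq)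
end
end

section
/- Every point of the 9-dimensional linear subspace 𝔸(S,t) = {p₁ = p₂ = p₃ = p₄ = q₁ = q₂ = q₃ = r = u = 0} ⊆ Σ¹⁴_𝔸 is a singular point of Σ¹⁴_𝔸: for every maximal ideal m of R_Σ containing the images of p₁, p₂, p₃, p₄, q₁, q₂, q₃, r, u, the localization of R_Σ at m is not a regular local ring. -/
/-!
`S_Σ = ℂ[p₁,p₂,p₃,p₄,q₁,q₂,q₃,r,u,s₁₁,s₁₂,s₁₃,s₂₂,s₂₃,s₃₃,t₁,t₂,t₃]` is the polynomial
ring in 18 variables, indexed by `Fin 18` in this order.  Writing `p`, `q`, `t` for the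
corresponding column vectors, `S` for the symmetric matrix with entries `sᵢⱼ`, `A` for the
skew-symmetric matrix attached to `q`, `S†` for the adjugate of `S`,
`(F₁,F₂,F₃)ᵗ = (rI − AS)·A·t` and `F₄ = −(r² + qᵗ·S†·q)`, the ideal `I_Σ` is generated by
the nine polynomials `pᵗ·q`, the three entries of `(rI + AS)·p + p₄·A·t`,
`pᵗ·S·p + p₄·pᵗ·t`, the three entries of `u·p − (F₁,F₂,F₃)ᵗ`, and `u·p₄ − F₄`.
`R_Σ = S_Σ/I_Σ`.
-/

open MvPolynomial Matrix

noncomputable section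

/-!
The equations `I_Σ` all lie in the square of the ideal of `𝔸(S,t)`, so at a point `a ∈ 𝔸(S,t)`
every equation vanishes to second order. Hence the first-order jet
`g ↦ (g(a), ∇g(a))`, a map into the square-zero extension `ℂ ⊕ ℂ¹⁸`, factors through the local
ring `R_Σ,a`, and it sends the maximal ideal onto `ℂ¹⁸`: the maximal ideal needs at least
18 generators. On the other hand `I_Σ ≠ 0`, so `dim R_Σ,a ≤ dim ℂ[x₁,…,x₁₈] - 1 = 17`.
-/

open IsLocalRing TrivSqZeroExt

section CotangentBound

variable {K L V : Type*} [Field K] [AddCommGroup V] [Module K V] [Module Kᵐᵒᵖ V]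
  [IsCentralScalar K V]

theorem TrivSqZeroExt.fst_algHom_eq_zero_of_mem_maximalIdeal [CommRing L] [IsLocalRing L]
    [Algebra K L] (ψ : L →ₐ[K] TrivSqZeroExt K V) {y : L} (hy : y ∈ maximalIdeal L) :
    (ψ y).fst = 0 := by
  let φ : L →ₐ[K] K := (fstHom K K V).comp ψ
  have hφ : Function.Surjective φ := fun c => ⟨algebraMap K L c, by simp [φ]⟩
  have hker : RingHom.ker φ = maximalIdeal L :=
    eq_maximalIdeal (RingHom.ker_isMaximal_of_surjective _ hφ)
  exact (hker ▸ hy : y ∈ RingHom.ker φ)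

theorem finrank_le_of_span_eq_maximalIdeal [CommSemiring L] [IsLocalRing L] [Algebra K L]
    [FiniteDimensional K V] (ψ : L →ₐ[K] TrivSqZeroExt K V)
    (hψ₀ : ∀ y ∈ maximalIdeal L, (ψ y).fst = 0)
    (hψ : Submodule.span K ((fun y => (ψ y).snd) '' maximalIdeal L) = ⊤)
    {n : ℕ} {f : Fin n → L} (hf : Ideal.span (Set.range f) = maximalIdeal L) :
    Module.finrank K V ≤ n := by
  suffices hspan : Submodule.span K (Set.range fun j => (ψ (f j)).snd) = ⊤ by
    have := finrank_range_le_card (R := K) fun j => (ψ (f j)).snd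
    rwa [Set.finrank, hspan, finrank_top, Fintype.card_fin] at this
  rw [eq_top_iff, ← hψ, Submodule.span_le]
  rintro _ ⟨y, hy, rfl⟩
  rw [← hf] at hy
  obtain ⟨c, rfl⟩ := Ideal.mem_span_range_iff_exists_fun.mp hy
  have hfst (j : Fin n) : (ψ (f j)).fst = 0 := hψ₀ _ (hf ▸ Ideal.subset_span ⟨j, rfl⟩)
  -- Leibniz rule in the square-zero extension: `snd (c * f) = fst c • snd f` once `fst f = 0`.
  simp only [map_sum, map_mul, snd_sum, snd_mul, hfst, MulOpposite.op_zero, zero_smul, add_zero]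
  exact Submodule.sum_mem _ fun j _ => Submodule.smul_mem _ _ (Submodule.subset_span ⟨j, rfl⟩)

end CotangentBound

namespace MvPolynomial

theorem ringKrullDim_localization_add_one_le {σ K : Type*} [Finite σ] [Field K]
    {I : Ideal (MvPolynomial σ K)} (hI : I ≠ ⊥) (m : Ideal (MvPolynomial σ K ⧸ I)) [m.IsPrime] :
    ringKrullDim (Localization.AtPrime m) + 1 ≤ Nat.card σ := by
  obtain ⟨r, hrI, hr0⟩ := Submodule.exists_mem_ne_zero_of_ne_bot hI
  calc ringKrullDim (Localization.AtPrime m) + 1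
      ≤ ringKrullDim (MvPolynomial σ K ⧸ I) + 1 := by
        rw [IsLocalization.AtPrime.ringKrullDim_eq_height m (Localization.AtPrime m)]
        gcongr
        exact Ideal.height_le_ringKrullDim_of_isPrime
    _ ≤ ringKrullDim (MvPolynomial σ K) :=
        ringKrullDim_succ_le_of_surjective _ Ideal.Quotient.mk_surjective
          (mem_nonZeroDivisors_of_ne_zero hr0) (Ideal.Quotient.eq_zero_iff_mem.mpr hrI)
    _ = Nat.card σ := by simp [ringKrullDim_of_isNoetherianRing]

section FirstJet

variable {σ K : Type*} [Field K] [DecidableEq σ]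

/-- Evaluation at the generic tangent vector at `a`: `firstJet a g = (g(a), ∇g(a))`. -/
def firstJet (a : σ → K) : MvPolynomial σ K →ₐ[K] TrivSqZeroExt K (σ → K) :=
  aeval fun i => inl (a i) + inr (Pi.single i 1)

theorem fst_firstJet (a : σ → K) (g : MvPolynomial σ K) : (firstJet a g).fst = aeval a g := by
  have : (fstHom K K (σ → K)).comp (firstJet a) = aeval a := by
    ext i
    simp [firstJet]
  exact AlgHom.congr_fun this g

theorem firstJet_X_sub_C (a : σ → K) (i : σ) :
    firstJet a (X i - C (a i)) = inr (Pi.single i 1) := by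
  simp [firstJet, algebraMap_eq_inl]

theorem firstJet_eq_zero_of_mem_sq {a : σ → K} {g : MvPolynomial σ K}
    (hg : g ∈ vanishingIdeal K {a} ^ 2) : firstJet a g = 0 := by
  have hle : (vanishingIdeal K {a}).map (firstJet a) ≤ kerIdeal K (σ → K) := by
    rw [Ideal.map_le_iff_le_comap]
    intro g hg
    simpa [kerIdeal, fst_firstJet, mem_vanishingIdeal_singleton_iff] using hg
  have hsq := Ideal.pow_right_mono hle 2 (Ideal.map_pow (firstJet a) _ 2 ▸ Ideal.mem_map_of_mem _ hg)
  rwa [kerIdeal_sq, Submodule.mem_bot] at hsq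

theorem card_le_of_span_eq_maximalIdeal [Fintype σ] {I : Ideal (MvPolynomial σ K)} {a : σ → K}
    (hI : I ≤ vanishingIdeal K {a} ^ 2) (m : Ideal (MvPolynomial σ K ⧸ I)) [m.IsPrime]
    (hm : m.comap (Ideal.Quotient.mk I) = vanishingIdeal K {a})
    {n : ℕ} {f : Fin n → Localization.AtPrime m}
    (hf : Ideal.span (Set.range f) = maximalIdeal (Localization.AtPrime m)) :
    Fintype.card σ ≤ n := by
  have hmem (g : MvPolynomial σ K) : Ideal.Quotient.mk I g ∈ m ↔ aeval a g = 0 := by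
    rw [← Ideal.mem_comap, hm, mem_vanishingIdeal_singleton_iff]
  let φ := Ideal.Quotient.liftₐ I (firstJet a) fun g hg => firstJet_eq_zero_of_mem_sq (hI hg)
  have hφ (g : MvPolynomial σ K) : φ (Ideal.Quotient.mk I g) = firstJet a g := rfl
  have hunit (s : m.primeCompl) : IsUnit (φ s) := by
    obtain ⟨g, hg⟩ := Ideal.Quotient.mk_surjective (s : MvPolynomial σ K ⧸ I)
    rw [← hg, hφ, isUnit_iff_isUnit_fst, fst_firstJet, isUnit_iff_ne_zero]
    exact fun h => s.2 (hg ▸ (hmem g).mpr h)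
  let ψ : Localization.AtPrime m →ₐ[K] TrivSqZeroExt K (σ → K) := IsLocalization.liftAlgHom hunit
  have hψ (x : MvPolynomial σ K ⧸ I) : ψ (algebraMap _ _ x) = φ x := IsLocalization.lift_eq hunit x
  have hspan :
      Submodule.span K ((fun y => (ψ y).snd) '' maximalIdeal (Localization.AtPrime m)) = ⊤ := by
    rw [eq_top_iff, ← (Pi.basisFun K σ).span_eq]
    refine Submodule.span_mono (Set.range_subset_iff.mpr fun i => ?_)
    refine ⟨algebraMap _ _ (Ideal.Quotient.mk I (X i - C (a i))), ?_, ?_⟩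
    · rw [SetLike.mem_coe, IsLocalization.AtPrime.to_map_mem_maximal_iff _ m, hmem]
      simp
    · simp only [Pi.basisFun_apply, hψ, hφ, firstJet_X_sub_C, snd_inr]
  -- Naming `L` makes Lean synthesize the localization's `CommRing` instance; unifying it
  -- against `OreLocalization`'s semiring structure times out.
  simpa using finrank_le_of_span_eq_maximalIdeal ψ
    (fun _ hy => fst_algHom_eq_zero_of_mem_maximalIdeal (L := Localization.AtPrime m) ψ hy)
    hspan hf

end FirstJet

end MvPolynomial

namespace Matrix

variable {R ι κ : Type*} [CommRing R] [Fintype κ] {I J : Ideal R}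

theorem dotProduct_mem_mul {v w : κ → R} (hv : ∀ i, v i ∈ I) (hw : ∀ i, w i ∈ J) :
    v ⬝ᵥ w ∈ I * J :=
  Ideal.sum_mem _ fun i _ => Ideal.mul_mem_mul (hv i) (hw i)

theorem mulVec_mem_mul {M : Matrix ι κ R} {w : κ → R} (hM : ∀ i j, M i j ∈ I)
    (hw : ∀ j, w j ∈ J) (i : ι) : (M *ᵥ w) i ∈ I * J :=
  dotProduct_mem_mul (hM i) hw

end Matrix

/-- The ideal of `𝔸(S,t) = {p₁ = ⋯ = p₄ = q₁ = q₂ = q₃ = r = u = 0}`. -/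
def IASt : Ideal SSigma := Ideal.span (X '' {i : Fin 18 | (i : ℕ) ≤ 8})

theorem X_mem_IASt {i : Fin 18} (hi : (i : ℕ) ≤ 8) : (X i : SSigma) ∈ IASt :=
  Ideal.subset_span ⟨i, hi, rfl⟩

theorem pVec_mem_IASt (i : Fin 3) : pVec i ∈ IASt := by
  fin_cases i <;> exact X_mem_IASt (by decide)

theorem qVec_mem_IASt (i : Fin 3) : qVec i ∈ IASt := by
  fin_cases i <;> exact X_mem_IASt (by decide)

theorem Amat_mem_IASt (i j : Fin 3) : Amat i j ∈ IASt := by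
  fin_cases i <;> fin_cases j <;> simp [Amat, X_mem_IASt]

theorem Amat_mul_mem_IASt (B : Matrix (Fin 3) (Fin 3) SSigma) (i j : Fin 3) :
    (Amat * B) i j ∈ IASt := by
  rw [Matrix.mul_apply']
  exact Ideal.mul_le_left (Matrix.dotProduct_mem_mul (Amat_mem_IASt i) fun _ => Submodule.mem_top)

theorem sigmaGens_mem_IASt_sq (k : Fin 9) : sigmaGens k ∈ IASt ^ 2 := by
  have hp₄ : (X 3 : SSigma) ∈ IASt := X_mem_IASt (by decide)
  have hr : (X 7 : SSigma) ∈ IASt := X_mem_IASt (by decide)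
  have hu : (X 8 : SSigma) ∈ IASt := X_mem_IASt (by decide)
  have hrI (i j : Fin 3) : ((X 7 : SSigma) • (1 : Matrix (Fin 3) (Fin 3) SSigma)) i j ∈ IASt :=
    Ideal.mul_mem_right _ _ hr
  have hAt (i : Fin 3) : (Amat *ᵥ tVec) i ∈ IASt :=
    Ideal.mul_le_left (Matrix.mulVec_mem_mul Amat_mem_IASt (fun _ => Submodule.mem_top) i)
  have hgen (i : Fin 3) : ((((X 7 : SSigma) • (1 : Matrix (Fin 3) (Fin 3) SSigma) +
      Amat * Smat) *ᵥ pVec) + (X 3 : SSigma) • (Amat *ᵥ tVec)) i ∈ IASt * IASt :=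
    add_mem (Matrix.mulVec_mem_mul (fun i j => add_mem (hrI i j) (Amat_mul_mem_IASt Smat i j))
      pVec_mem_IASt i) (Ideal.mul_mem_mul hp₄ (hAt i))
  have hF (i : Fin 3) : ((X 8 : SSigma) • pVec - Fvec) i ∈ IASt * IASt :=
    sub_mem (Ideal.mul_mem_mul hu (pVec_mem_IASt i)) (Matrix.mulVec_mem_mul
      (fun i j => sub_mem (hrI i j) (Amat_mul_mem_IASt Smat i j)) hAt i)
  rw [sq]
  fin_cases k
  · exact Matrix.dotProduct_mem_mul pVec_mem_IASt qVec_mem_IASt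
  · exact hgen 0
  · exact hgen 1
  · exact hgen 2
  · exact add_mem (Matrix.dotProduct_mem_mul pVec_mem_IASt fun i =>
      Ideal.mul_le_right (Matrix.mulVec_mem_mul (fun _ _ => Submodule.mem_top) pVec_mem_IASt i))
      (Ideal.mul_mem_mul hp₄ (Ideal.mul_le_left
        (Matrix.dotProduct_mem_mul pVec_mem_IASt fun _ => Submodule.mem_top)))
  · exact hF 0
  · exact hF 1
  · exact hF 2
  · refine sub_mem (Ideal.mul_mem_mul hu hp₄) (neg_mem (add_mem ?_ ?_))
    · exact (sq (X 7 : SSigma)).symm ▸ Ideal.mul_mem_mul hr hr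
    · exact Matrix.dotProduct_mem_mul qVec_mem_IASt fun i =>
        Ideal.mul_le_right (Matrix.mulVec_mem_mul (fun _ _ => Submodule.mem_top) qVec_mem_IASt i)

theorem ISigma_le_IASt_sq : ISigma ≤ IASt ^ 2 :=
  Ideal.span_le.mpr (Set.range_subset_iff.mpr sigmaGens_mem_IASt_sq)

theorem ISigma_ne_bot : ISigma ≠ ⊥ := by
  intro h
  have h0 : sigmaGens 0 ∈ ISigma := Ideal.subset_span ⟨0, rfl⟩
  rw [h, Submodule.mem_bot] at h0
  have := congrArg (eval fun _ => (1 : ℂ)) h0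
  simp only [sigmaGens, pVec, qVec, dotProduct, Fin.sum_univ_three, cons_val_zero, cons_val_one,
    cons_val, map_add, map_mul, eval_X, mul_one] at this
  norm_num at this

theorem IASt_le_vanishingIdeal {a : Fin 18 → ℂ} (ha : ∀ i : Fin 18, (i : ℕ) ≤ 8 → a i = 0) :
    IASt ≤ vanishingIdeal ℂ {a} := by
  rw [IASt, Ideal.span_le]
  rintro _ ⟨i, hi, rfl⟩
  simp [ha i hi]

/-- Every point of the 9-dimensional linear subspace
`𝔸(S,t) = {p₁ = ⋯ = p₄ = q₁ = q₂ = q₃ = r = u = 0} ⊆ Σ¹⁴_𝔸` is a singular point of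
`Σ¹⁴_𝔸`: for every maximal ideal `m` of `R_Σ` containing the images of
`p₁, p₂, p₃, p₄, q₁, q₂, q₃, r, u` (the variables of index `≤ 8`), the localization of
`R_Σ` at `m` is not a regular local ring, i.e. its maximal ideal cannot be generated by
Krull-dimension many elements. -/
theorem sigma_singular_along_ASt (m : Ideal RSigma) [hp : m.IsPrime] (hm : m.IsMaximal)
    (hmem : ∀ i : Fin 18, (i : ℕ) ≤ 8 → Ideal.Quotient.mk ISigma (X i) ∈ m) :
    ¬ ∃ (n : ℕ) (f : Fin n → Localization.AtPrime m),
        Ideal.span (Set.range f) = IsLocalRing.maximalIdeal (Localization.AtPrime m) ∧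
          (n : WithBot (WithTop ℕ)) = ringKrullDim (Localization.AtPrime m) := by
  rintro ⟨n, f, hf, hdim⟩
  have : (m.comap (Ideal.Quotient.mk ISigma)).IsMaximal :=
    Ideal.comap_isMaximal_of_surjective _ Ideal.Quotient.mk_surjective
  obtain ⟨a, ha⟩ := isMaximal_iff_eq_vanishingIdeal_singleton.mp this
  have ha₀ (i : Fin 18) (hi : (i : ℕ) ≤ 8) : a i = 0 := by
    have := Ideal.mem_comap.mpr (hmem i hi)
    rwa [ha, mem_vanishingIdeal_singleton_iff, aeval_X] at this
  have hI : ISigma ≤ vanishingIdeal ℂ {a} ^ 2 :=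
    ISigma_le_IASt_sq.trans (Ideal.pow_right_mono (IASt_le_vanishingIdeal ha₀) 2)
  have h18 : 18 ≤ n := by simpa using card_le_of_span_eq_maximalIdeal hI m ha hf
  have hdim17 := ringKrullDim_localization_add_one_le ISigma_ne_bot m
  rw [← hdim, Nat.card_eq_fintype_card, Fintype.card_fin] at hdim17
  have h17 : n + 1 ≤ 18 := by
    have : ((n + 1 : ℕ) : WithBot ℕ∞) ≤ ((18 : ℕ) : WithBot ℕ∞) := by push_cast; exact hdim17
    exact Nat.cast_le.mp this
  omega
end
end
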